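/- arXiv:1707.09005 — 5 statements merged into one kernel-verified Lean document; each statement's English description precedes it below -/
import Mathlib

section
/- Let K be an abstract elementary class in a vocabulary τ that does not contain the empty structure. Then there exists a vocabulary τ′ ⊇ τ with |τ′| = |τ| + LS(K) and a universal class K′ in the vocabulary τ′ such that the reduct map M′ ↦ M′↾τ is a faithful functor from K′ to K which preserves directed colimits and is surjective on objects. -/
universe u v w

open CategoryTheory CategoryTheory.Limits Cardinal FirstOrder

noncomputable section

namespace Paper

/-! ## General category-theoretic notions -/

/-- A preorder is `κ`-directed if every subset of cardinality `< κ` has an upper bound. -/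
def CardDirected (κ : Cardinal.{u}) (J : Type u) [Preorder J] : Prop :=
  ∀ S : Set J, #S < κ → ∃ j : J, ∀ s ∈ S, s ≤ j

/-- A bundled preordered index type. -/
structure IndexPoset : Type (u + 1) where
  J : Type u
  pre : Preorder J

instance (P : IndexPoset.{u}) : Preorder P.J := P.pre

/-- `C` has all `κ`-directed colimits (indexed by `κ`-directed preorders in `Type u`).
For `κ = ℵ₀` these are the usual directed colimits. -/
def HasCardDirectedColimits (κ : Cardinal.{u}) (C : Type v) [Category.{w} C] : Prop :=
  ∀ (J : Type u) [Preorder J], CardDirected κ J → HasColimitsOfShape J C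

/-- An object `M` is `κ`-presentable if its hom-functor `C(M,-)` preserves `κ`-directed
colimits, i.e. every morphism from `M` into a `κ`-directed colimit factors essentially
uniquely through some stage of the diagram.  For `κ = ℵ₀` this is `ℵ₀`-presentability. -/
def IsCardPresentable {C : Type v} [Category.{w} C] (κ : Cardinal.{u}) (M : C) : Prop :=
  ∀ (J : Type u) [Preorder J], CardDirected κ J →
    ∀ (D : J ⥤ C) (c : Cocone D), IsColimit c →
      (∀ f : M ⟶ c.pt, ∃ (j : J) (g : M ⟶ D.obj j), g ≫ c.ι.app j = f) ∧
      (∀ (j : J) (g₁ g₂ : M ⟶ D.obj j), g₁ ≫ c.ι.app j = g₂ ≫ c.ι.app j →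
        ∃ (j' : J) (h : j ≤ j'), g₁ ≫ D.map (homOfLE h) = g₂ ≫ D.map (homOfLE h))

/-- `C` is `κ`-accessible: it has all `κ`-directed colimits and there is a *set* `S`
of `κ`-presentable objects such that every object of `C` is a `κ`-directed colimit
of objects from `S`. -/
def IsCardAccessible (κ : Cardinal.{u}) (C : Type v) [Category.{w} C] : Prop :=
  HasCardDirectedColimits.{u} κ C ∧
    ∃ S : Set C, Small.{u} S ∧ (∀ M ∈ S, IsCardPresentable.{u} κ M) ∧
      ∀ X : C, ∃ (P : IndexPoset.{u}) (D : P.J ⥤ C) (c : Cocone D),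
        CardDirected κ P.J ∧ (∀ j, D.obj j ∈ S) ∧ c.pt = X ∧ Nonempty (IsColimit c)

/-- `C` has all connected limits (limits over small connected index categories). -/
def HasConnectedLimits (C : Type v) [Category.{w} C] : Prop :=
  ∀ (J : Type u) [SmallCategory J], IsConnected J → HasLimitsOfShape J C

/-- A functor preserves directed colimits. -/
def PreservesDirectedColimits {D : Type*} [Category D] {C : Type*} [Category C]
    (F : D ⥤ C) : Prop :=
  ∀ (J : Type u) [Preorder J], IsDirected J (· ≤ ·) → Nonempty J →
    PreservesColimitsOfShape J F

/-- A functor `F : L ⥤ C` is *pullback-full* if for every set-indexed family of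
morphisms `f i : B i ⟶ C₀` in `L` and every family `g i : A ⟶ F.obj (B i)` in `C`
with `F.map (f i) ∘ g i` all equal, the family `g` lifts along `F`. -/
def PullbackFull {L : Type*} [Category L] {C : Type*} [Category C] (F : L ⥤ C) : Prop :=
  ∀ (I : Type u) (B : I → L) (C₀ : L) (f : ∀ i, B i ⟶ C₀) (A : C)
    (g : ∀ i, A ⟶ F.obj (B i)),
    (∀ i j, g i ≫ F.map (f i) = g j ≫ F.map (f j)) →
    ∃ (A' : L) (hA : F.obj A' = A) (gb : ∀ i, A' ⟶ B i),
      ∀ i, F.map (gb i) = eqToHom hA ≫ g i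

/-! ## Classes of structures in a finitary vocabulary

A `SetStruct L W` is a `τ`-structure (for the finitary first-order vocabulary `L`)
whose universe is a small subset of the ambient class `W` of elements.  The
interpretations of function and relation symbols are given as total functions on
tuples from `W` (their values outside the universe are irrelevant junk), so that the
substructure relation can be taken literally. -/

variable (L : FirstOrder.Language.{u, u}) (W : Type (u + 1))

structure SetStruct : Type (u + 1) where
  carrier : Set W
  small : Small.{u} carrier
  fn : ∀ n : ℕ, L.Functions n → (Fin n → W) → W
  rel : ∀ n : ℕ, L.Relations n → (Fin n → W) → Prop
  fn_mem : ∀ (n : ℕ) (f : L.Functions n) (x : Fin n → W),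
    (∀ i, x i ∈ carrier) → fn n f x ∈ carrier

variable {L W}

theorem SetStruct.ext' {M N : SetStruct L W} (hc : M.carrier = N.carrier)
    (hf : ∀ n f x, M.fn n f x = N.fn n f x)
    (hr : ∀ n r x, M.rel n r x ↔ N.rel n r x) : M = N := by
  rcases M with ⟨c₁, s₁, f₁, r₁, m₁⟩
  rcases N with ⟨c₂, s₂, f₂, r₂, m₂⟩
  dsimp only at hc hf hr
  subst hc
  have hf' : f₁ = f₂ := by funext n f x; exact hf n f x
  have hr' : r₁ = r₂ := by funext n r x; exact propext (hr n r x)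
  subst hf'; subst hr'
  rfl

/-- `M` is a substructure of `N`:  the universe of `M` is contained in that of `N` and
the interpretations of all function and relation symbols agree on tuples from `M`
(in particular relations are both preserved and reflected). -/
def Sub (M N : SetStruct L W) : Prop :=
  M.carrier ⊆ N.carrier ∧
    (∀ (n : ℕ) (f : L.Functions n) (x : Fin n → W),
      (∀ i, x i ∈ M.carrier) → M.fn n f x = N.fn n f x) ∧
    (∀ (n : ℕ) (r : L.Relations n) (x : Fin n → W),
      (∀ i, x i ∈ M.carrier) → (M.rel n r x ↔ N.rel n r x))

theorem Sub.refl (M : SetStruct L W) : Sub M M :=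
  ⟨le_refl _, fun _ _ _ _ => rfl, fun _ _ _ _ => Iff.rfl⟩

theorem Sub.trans {M N P : SetStruct L W} (h₁ : Sub M N) (h₂ : Sub N P) : Sub M P :=
  ⟨h₁.1.trans h₂.1,
   fun n f x hx => (h₁.2.1 n f x hx).trans (h₂.2.1 n f x fun i => h₁.1 (hx i)),
   fun n r x hx => (h₁.2.2 n r x hx).trans (h₂.2.2 n r x fun i => h₁.1 (hx i))⟩

/-- A (substructure) embedding of `τ`-structures: an injective map preserving all
function symbols and preserving and reflecting all relation symbols. -/
structure Emb (M N : SetStruct L W) : Type (u + 1) where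
  toFun : M.carrier → N.carrier
  inj : Function.Injective toFun
  map_fn : ∀ (n : ℕ) (f : L.Functions n) (x : Fin n → M.carrier),
    (toFun ⟨M.fn n f fun i => (x i : W), M.fn_mem n f _ fun i => (x i).2⟩ : W) =
      N.fn n f fun i => (toFun (x i) : W)
  map_rel : ∀ (n : ℕ) (r : L.Relations n) (x : Fin n → M.carrier),
    M.rel n r (fun i => (x i : W)) ↔ N.rel n r fun i => (toFun (x i) : W)

theorem Emb.ext' {M N : SetStruct L W} {e₁ e₂ : Emb M N}
    (h : e₁.toFun = e₂.toFun) : e₁ = e₂ := by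
  rcases e₁ with ⟨f₁, i₁, mf₁, mr₁⟩
  rcases e₂ with ⟨f₂, i₂, mf₂, mr₂⟩
  dsimp only at h
  subst h
  rfl

/-- The identity embedding. -/
def Emb.refl (M : SetStruct L W) : Emb M M where
  toFun := id
  inj := fun _ _ h => h
  map_fn _ _ _ := rfl
  map_rel _ _ _ := Iff.rfl

/-- Composition of embeddings. -/
def Emb.comp {M N P : SetStruct L W} (g : Emb N P) (f : Emb M N) : Emb M P where
  toFun := g.toFun ∘ f.toFun
  inj := g.inj.comp f.inj
  map_fn n φ x := by
    have h1 : f.toFun ⟨M.fn n φ fun i => (x i : W), M.fn_mem n φ _ fun i => (x i).2⟩ =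
        ⟨N.fn n φ fun i => (f.toFun (x i) : W), N.fn_mem n φ _ fun i => (f.toFun (x i)).2⟩ :=
      Subtype.ext (f.map_fn n φ x)
    show (g.toFun (f.toFun _) : W) = _
    rw [h1]
    exact g.map_fn n φ fun i => f.toFun (x i)
  map_rel n r x :=
    (f.map_rel n r x).trans (g.map_rel n r fun i => f.toFun (x i))

/-- The inclusion embedding of a substructure. -/
def Sub.emb {M N : SetStruct L W} (h : Sub M N) : Emb M N where
  toFun x := ⟨(x : W), h.1 x.2⟩
  inj := by
    intro a b hab
    have hv : (a : W) = (b : W) := by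
      have hv0 := congrArg Subtype.val hab
      exact hv0
    exact Subtype.ext hv
  map_fn n f x := h.2.1 n f _ fun i => (x i).2
  map_rel n r x := h.2.2 n r _ fun i => (x i).2

/-- The image structure `f[M] ⊆ N` of an embedding `f : M → N`. -/
def Emb.imageStruct {M N : SetStruct L W} (e : Emb M N) : SetStruct L W where
  carrier := Set.range fun x : M.carrier => (e.toFun x : W)
  small := by
    haveI := M.small
    exact small_range _
  fn := N.fn
  rel := N.rel
  fn_mem := by
    intro n f x hx
    choose y hy using hx
    have hy' : ∀ i, (e.toFun (y i) : W) = x i := hy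
    refine ⟨⟨M.fn n f fun i => (y i : W), M.fn_mem n f _ fun i => (y i).2⟩, ?_⟩
    show (e.toFun ⟨M.fn n f fun i => (y i : W), M.fn_mem n f _ fun i => (y i).2⟩ : W) =
      N.fn n f x
    rw [e.map_fn n f y]
    exact congrArg (N.fn n f) (funext hy')

theorem Emb.imageStruct_sub {M N : SetStruct L W} (e : Emb M N) : Sub e.imageStruct N := by
  refine ⟨?_, fun _ _ _ _ => rfl, fun _ _ _ _ => Iff.rfl⟩
  rintro _ ⟨x, rfl⟩
  exact (e.toFun x).2

/-- Corestriction of an embedding onto its image. -/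
def Emb.corestrict {M N : SetStruct L W} (e : Emb M N) : Emb M e.imageStruct where
  toFun x := ⟨(e.toFun x : W), ⟨x, rfl⟩⟩
  inj := by
    intro a b h
    have hv : (e.toFun a : W) = (e.toFun b : W) := by
      have hv0 := congrArg Subtype.val h
      exact hv0
    exact e.inj (Subtype.ext hv)
  map_fn n f x := e.map_fn n f x
  map_rel n r x := e.map_rel n r x

theorem Emb.corestrict_surjective {M N : SetStruct L W} (e : Emb M N) :
    Function.Surjective e.corestrict.toFun := by
  rintro ⟨y, x, rfl⟩
  exact ⟨x, rfl⟩

theorem imageStruct_refl (M : SetStruct L W) : (Emb.refl M).imageStruct = M := by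
  refine SetStruct.ext' ?_ (fun _ _ _ => rfl) (fun _ _ _ => Iff.rfl)
  exact Subtype.range_coe

/-! ## Universal classes -/

variable (L W)

/-- A *universal class*: a class of `τ`-structures closed under isomorphism,
substructures, and unions of directed systems of substructure inclusions. -/
structure UniversalClass : Type (u + 2) where
  K : Set (SetStruct L W)
  iso_closed : ∀ {M N : SetStruct L W} (e : Emb M N),
    Function.Surjective e.toFun → M ∈ K → N ∈ K
  sub_closed : ∀ {M N : SetStruct L W}, Sub M N → N ∈ K → M ∈ K
  union_closed : ∀ (P : IndexPoset.{u}), IsDirected P.J (· ≤ ·) → Nonempty P.J →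
    ∀ D : P.J → SetStruct L W, (∀ j, D j ∈ K) →
      (∀ ⦃j j' : P.J⦄, j ≤ j' → Sub (D j) (D j')) →
      ∀ MU : SetStruct L W, MU.carrier = ⋃ j, (D j).carrier →
        (∀ j, Sub (D j) MU) → MU ∈ K

variable {L W}

/-- The category associated to a universal class: objects are its members,
morphisms are all substructure embeddings. -/
def UnivCat (U : UniversalClass L W) : Type (u + 1) :=
  {M : SetStruct L W // M ∈ U.K}

instance (U : UniversalClass L W) : Category (UnivCat U) where
  Hom M N := Emb M.1 N.1
  id M := Emb.refl M.1
  comp f g := g.comp f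
  id_comp _ := Emb.ext' rfl
  comp_id _ := Emb.ext' rfl
  assoc _ _ _ := Emb.ext' rfl

/-! ## Abstract elementary classes -/

variable (L W)

/-- The Löwenheim–Skolem–Tarski property for the (set-sized) cardinal `κ`. -/
def LSTWitness (K : Set (SetStruct L W))
    (le : SetStruct L W → SetStruct L W → Prop) (κ : Cardinal.{u + 1}) : Prop :=
  κ < Cardinal.univ.{u, u + 1} ∧ Cardinal.lift.{u + 1} L.card ≤ κ ∧ ℵ₀ ≤ κ ∧
    ∀ M ∈ K, ∀ s : Set W, s ⊆ M.carrier →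
      ∃ M₀ : SetStruct L W, le M₀ M ∧ s ⊆ M₀.carrier ∧ #M₀.carrier ≤ #s + κ

/-- An abstract elementary class (AEC) in the finitary vocabulary `L`: an abstract
class (a class of structures closed under isomorphism together with a strong
substructure order `le` refining the substructure relation and respecting
isomorphisms) satisfying coherence, the chain (Tarski–Vaught) axioms, and the
Löwenheim–Skolem–Tarski axiom. -/
structure AEC : Type (u + 2) where
  K : Set (SetStruct L W)
  le : SetStruct L W → SetStruct L W → Prop
  le_mem : ∀ {M N : SetStruct L W}, le M N → M ∈ K ∧ N ∈ K
  le_refl : ∀ M ∈ K, le M M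
  le_trans : ∀ {M N P : SetStruct L W}, le M N → le N P → le M P
  le_antisymm : ∀ {M N : SetStruct L W}, le M N → le N M → M = N
  le_sub : ∀ {M N : SetStruct L W}, le M N → Sub M N
  iso_closed : ∀ {M N : SetStruct L W} (e : Emb M N),
    Function.Surjective e.toFun → M ∈ K → N ∈ K
  le_iso : ∀ {M N N' : SetStruct L W} (e : Emb N N'),
    Function.Surjective e.toFun → ∀ h : le M N,
      le (Emb.imageStruct (Emb.comp e (Sub.emb (le_sub h)))) N'
  coherence : ∀ {M₀ M₁ M₂ : SetStruct L W},
    Sub M₀ M₁ → le M₁ M₂ → le M₀ M₂ → le M₀ M₁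
  chain : ∀ (P : IndexPoset.{u}), IsDirected P.J (· ≤ ·) → Nonempty P.J →
    ∀ D : P.J → SetStruct L W, (∀ ⦃j j' : P.J⦄, j ≤ j' → le (D j) (D j')) →
      ∃ MU : SetStruct L W, MU ∈ K ∧ MU.carrier = ⋃ j, (D j).carrier ∧
        (∀ j, le (D j) MU) ∧ ∀ N : SetStruct L W, (∀ j, le (D j) N) → le MU N
  lst : ∃ κ : Cardinal.{u + 1}, LSTWitness L W K le κ

variable {L W}

/-- The Löwenheim–Skolem–Tarski number of an AEC. -/
def AEC.LS (A : AEC L W) : Cardinal.{u + 1} :=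
  sInf {κ | LSTWitness L W A.K A.le κ}

theorem AEC.le_image_comp (A : AEC L W) {M N P : SetStruct L W}
    {f : Emb M N} {g : Emb N P}
    (hf : A.le f.imageStruct N) (hg : A.le g.imageStruct P) :
    A.le (g.comp f).imageStruct P := by
  have h := A.le_iso g.corestrict g.corestrict_surjective hf
  have key : (Emb.comp g.corestrict (Sub.emb (A.le_sub hf))).imageStruct =
      (g.comp f).imageStruct := by
    refine SetStruct.ext' ?_ (fun _ _ _ => rfl) (fun _ _ _ => Iff.rfl)
    ext w
    constructor
    · rintro ⟨x, hx⟩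
      obtain ⟨z, hz⟩ := x.2
      refine ⟨z, ?_⟩
      rw [← hx]
      exact congrArg (fun t : N.carrier => (g.toFun t : W)) (Subtype.ext hz)
    · rintro ⟨z, hz⟩
      refine ⟨⟨(f.toFun z : W), ⟨z, rfl⟩⟩, ?_⟩
      rw [← hz]
      exact congrArg (fun t : N.carrier => (g.toFun t : W)) (Subtype.ext rfl)
  rw [key] at h
  exact A.le_trans h hg

/-- The category associated to an AEC: objects are its members, morphisms are the
`K`-embeddings, i.e. those embeddings `f : M → N` whose image `f[M]` is a strong
(`≤`) substructure of `N`. -/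
def AEC.Cat (A : AEC L W) : Type (u + 1) :=
  {M : SetStruct L W // M ∈ A.K}

instance (A : AEC L W) : Category A.Cat where
  Hom M N := {e : Emb M.1 N.1 // A.le e.imageStruct N.1}
  id M := ⟨Emb.refl M.1, by rw [imageStruct_refl]; exact A.le_refl M.1 M.2⟩
  comp f g := ⟨g.1.comp f.1, A.le_image_comp f.2 g.2⟩
  id_comp _ := Subtype.ext (Emb.ext' rfl)
  comp_id _ := Subtype.ext (Emb.ext' rfl)
  assoc _ _ _ := Subtype.ext (Emb.ext' rfl)

/-- The closure `cl^N(s)`: the intersection of the universes of all strong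
substructures of `N` containing `s`. -/
def AEC.clSet (A : AEC L W) (N : SetStruct L W) (s : Set W) : Set W :=
  ⋂ M ∈ {M : SetStruct L W | A.le M N ∧ s ⊆ M.carrier}, M.carrier

/-- `K` admits intersections: for every `N ∈ K` and `s ⊆ UN`, the set `cl^N(s)` is
the universe of a strong substructure of `N`. -/
def AEC.AdmitsIntersections (A : AEC L W) : Prop :=
  ∀ N ∈ A.K, ∀ s : Set W, s ⊆ N.carrier →
    ∃ M₀ : SetStruct L W, A.le M₀ N ∧ M₀.carrier = A.clSet N s

theorem AEC.clSet_subset (A : AEC L W) {N : SetStruct L W} (hN : N ∈ A.K)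
    {s : Set W} (hs : s ⊆ N.carrier) : A.clSet N s ⊆ N.carrier :=
  Set.biInter_subset_of_mem (⟨A.le_refl N hN, hs⟩ : _ ∈ {M : SetStruct L W | A.le M N ∧ s ⊆ M.carrier})

/-- The canonical structure with universe `cl^N(s)` (the restriction of `N`). -/
def AEC.clStruct (A : AEC L W) (N : SetStruct L W) (s : Set W)
    (hN : N ∈ A.K) (hs : s ⊆ N.carrier) : SetStruct L W where
  carrier := A.clSet N s
  small := by
    haveI := N.small
    exact small_subset (A.clSet_subset hN hs)
  fn := N.fn
  rel := N.rel
  fn_mem := by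
    intro n f x hx
    refine Set.mem_iInter₂.2 fun M hM => ?_
    have hxM : ∀ i, x i ∈ M.carrier := fun i => Set.mem_iInter₂.1 (hx i) M hM
    have hfn := (A.le_sub hM.1).2.1 n f x hxM
    exact hfn ▸ M.fn_mem n f x hxM

/-- `K` is pseudo-universal: it admits intersections and any two `K`-embeddings
agreeing on a set `s` agree on `cl(s)`. -/
def AEC.PseudoUniversal (A : AEC L W) : Prop :=
  A.AdmitsIntersections ∧
    ∀ M N : SetStruct L W, M ∈ A.K → N ∈ A.K →
      ∀ f g : Emb M N, A.le f.imageStruct N → A.le g.imageStruct N →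
        ∀ s : Set W, s ⊆ M.carrier →
          (∀ x : M.carrier, (x : W) ∈ s → f.toFun x = g.toFun x) →
          ∀ x : M.carrier, (x : W) ∈ A.clSet M s → f.toFun x = g.toFun x

/-- The reduct of a structure along a vocabulary morphism `φ : L →ᴸ L'`. -/
def SetStruct.reduct {L L' : FirstOrder.Language.{u, u}} (φ : L →ᴸ L')
    {W : Type (u + 1)} (M : SetStruct L' W) : SetStruct L W where
  carrier := M.carrier
  small := M.small
  fn n f x := M.fn n (φ.onFunction f) x
  rel n r x := M.rel n (φ.onRelation r) x
  fn_mem n f x hx := M.fn_mem n (φ.onFunction f) x hx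

/-- The subset of `N` generated by `s`: the least subset of the universe of `N`
containing `s` and closed under all functions of `N`. -/
def genSet (N : SetStruct L W) (s : Set W) : Set W :=
  ⋂ t ∈ {t : Set W | s ⊆ t ∧ t ⊆ N.carrier ∧
    ∀ (n : ℕ) (f : L.Functions n) (x : Fin n → W), (∀ i, x i ∈ t) → N.fn n f x ∈ t}, t


/-- The underlying embedding of a morphism in the category of a universal class. -/
def univHomEmb {U : UniversalClass L W} {M N : UnivCat U} (e : M ⟶ N) : Emb M.1 N.1 := e

/-- The underlying embedding of a morphism in the category of an AEC. -/
def aecHomEmb {A : AEC L W} {M N : A.Cat} (e : M ⟶ N) : Emb M.1 N.1 :=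
  (e : {f : Emb M.1 N.1 // A.le f.imageStruct N.1}).1


/-!
Expand the vocabulary by `LS(K)` new function symbols of every arity, and let `K'` consist of
the expansions `M'` in which the reducts of the finitely generated substructures form a
`≤`-coherent system in `K`. This condition passes to isomorphic copies, substructures and
directed unions, so `K'` is universal; by the chain axiom the reduct of `M' ∈ K'` is the union
of that system, hence lies in `K` with every piece strong in it, and the same argument makes
reducts of embeddings `K`-embeddings. Every `M ∈ K` has an expansion in `K'`: choose, by
recursion on finite `s`, strong substructures `H(s) ≤ M` of size at most `LS(K)` containing
`s` and all `H(t)` for `t ⊂ s`, and let the new symbols enumerate `H(ran x̄)`; the substructure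
generated by any set is then a directed union of the `H(s)`, hence strong in `M`. Finally a
directed colimit in `K'` is the union of the images of its legs, and any cocone in `K` with
jointly surjective legs is a colimit.
-/

open FirstOrder.Language (LHom)

theorem Sub.of_subset {M N : SetStruct L W} (h : M.carrier ⊆ N.carrier) (hf : M.fn = N.fn)
    (hr : M.rel = N.rel) : Sub M N :=
  ⟨h, fun _ _ _ _ => by rw [hf], fun _ _ _ _ => by rw [hr]⟩

theorem Sub.of_subset_of_sub {M N P : SetStruct L W} (h : M.carrier ⊆ N.carrier) (hM : Sub M P)
    (hN : Sub N P) : Sub M N :=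
  ⟨h, fun n f x hx => (hM.2.1 n f x hx).trans (hN.2.1 n f x fun i => h (hx i)).symm,
    fun n r x hx => (hM.2.2 n r x hx).trans (hN.2.2 n r x fun i => h (hx i)).symm⟩

theorem Sub.symm_of_subset {M N : SetStruct L W} (h : Sub M N) (h' : N.carrier ⊆ M.carrier) :
    Sub N M :=
  ⟨h', fun n f x hx => (h.2.1 n f x fun i => h' (hx i)).symm,
    fun n r x hx => (h.2.2 n r x fun i => h' (hx i)).symm⟩

theorem Sub.emb_surjective {M N : SetStruct L W} (h : Sub M N) (h' : N.carrier ⊆ M.carrier) :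
    Function.Surjective h.emb.toFun :=
  fun y => ⟨⟨y, h' y.2⟩, rfl⟩

/-! ### Generated substructures and images of sets -/

section genSet

variable {N : SetStruct L W} {s t : Set W}

theorem subset_genSet : s ⊆ genSet N s :=
  fun _ hw => Set.mem_iInter₂.2 fun _ ht => ht.1 hw

theorem genSet_subset (hst : s ⊆ t) (ht : t ⊆ N.carrier)
    (hcl : ∀ n f x, (∀ i, x i ∈ t) → N.fn n f x ∈ t) : genSet N s ⊆ t :=
  Set.biInter_subset_of_mem ⟨hst, ht, hcl⟩

theorem genSet_subset_carrier (hs : s ⊆ N.carrier) : genSet N s ⊆ N.carrier :=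
  genSet_subset hs le_rfl N.fn_mem

theorem fn_mem_genSet {n : ℕ} (f : L.Functions n) {x : Fin n → W}
    (hx : ∀ i, x i ∈ genSet N s) : N.fn n f x ∈ genSet N s :=
  Set.mem_iInter₂.2 fun _ ht => ht.2.2 n f x fun i => Set.mem_iInter₂.1 (hx i) _ ht

theorem genSet_mono (hst : s ⊆ t) (ht : t ⊆ N.carrier) : genSet N s ⊆ genSet N t :=
  genSet_subset (hst.trans subset_genSet) (genSet_subset_carrier ht) fun _ f _ => fn_mem_genSet f

theorem genSet_eq_of_sub {M : SetStruct L W} (hMN : Sub M N) (hs : s ⊆ M.carrier) :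
    genSet M s = genSet N s := by
  have hM : genSet N s ⊆ M.carrier := genSet_subset hs hMN.1 fun n f x hx =>
    hMN.2.1 n f x hx ▸ M.fn_mem n f x hx
  apply Set.Subset.antisymm
  · refine genSet_subset subset_genSet hM fun n f x hx => ?_
    rw [hMN.2.1 n f x fun i => hM (hx i)]
    exact fn_mem_genSet f hx
  · refine genSet_subset subset_genSet ((genSet_subset_carrier hs).trans hMN.1) fun n f x hx => ?_
    rw [← hMN.2.1 n f x fun i => genSet_subset_carrier hs (hx i)]
    exact fn_mem_genSet f hx

end genSet

namespace Emb

variable {M N : SetStruct L W} (e : Emb M N)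

def image (s : Set W) : Set W :=
  (fun x : M.carrier => (e.toFun x : W)) '' (Subtype.val ⁻¹' s)

def preimage (u : Set W) : Set W :=
  Subtype.val '' ((fun x : M.carrier => (e.toFun x : W)) ⁻¹' u)

variable {e}

theorem mem_image {s : Set W} {w : W} :
    w ∈ e.image s ↔ ∃ x : M.carrier, (x : W) ∈ s ∧ (e.toFun x : W) = w :=
  Iff.rfl

theorem image_mono {s t : Set W} (hst : s ⊆ t) : e.image s ⊆ e.image t :=
  Set.image_mono (Set.preimage_mono hst)

theorem image_subset_carrier (s : Set W) : e.image s ⊆ N.carrier := by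
  rintro _ ⟨x, _, rfl⟩
  exact (e.toFun x).2

theorem image_finite {s : Set W} (hs : s.Finite) : (e.image s).Finite :=
  (hs.preimage Subtype.val_injective.injOn).image _

theorem preimage_mono {s t : Set W} (hst : s ⊆ t) : e.preimage s ⊆ e.preimage t :=
  Set.image_mono (Set.preimage_mono hst)

theorem preimage_subset_carrier (u : Set W) : e.preimage u ⊆ M.carrier := by
  rintro _ ⟨x, _, rfl⟩
  exact x.2

theorem preimage_finite {u : Set W} (hu : u.Finite) : (e.preimage u).Finite :=
  (hu.preimage (Subtype.val_injective.comp e.inj).injOn).image _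

theorem image_preimage (he : Function.Surjective e.toFun) {u : Set W}
    (hu : u ⊆ N.carrier) : e.image (e.preimage u) = u := by
  ext w
  constructor
  · rintro ⟨x, ⟨z, hz, hzx⟩, rfl⟩
    rwa [← Subtype.ext hzx]
  · intro hw
    obtain ⟨x, hx⟩ := he ⟨w, hu hw⟩
    exact ⟨x, ⟨x, by simpa [hx] using hw, rfl⟩, congrArg Subtype.val hx⟩

theorem range_eq_image_carrier :
    (Set.range fun x : M.carrier => (e.toFun x : W)) = e.image M.carrier := by
  simp [image]

theorem image_iUnion {ι : Type*} (s : ι → Set W) :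
    e.image (⋃ i, s i) = ⋃ i, e.image (s i) := by
  simp only [image, Set.preimage_iUnion, Set.image_iUnion]

theorem genSet_image {s : Set W} (hs : s ⊆ M.carrier) :
    genSet N (e.image s) = e.image (genSet M s) := by
  apply Set.Subset.antisymm
  · refine genSet_subset (image_mono subset_genSet) (image_subset_carrier _) fun n f x hx => ?_
    choose y hy hyx using fun i => mem_image.1 (hx i)
    obtain rfl : x = fun i => (e.toFun (y i) : W) := funext fun i => (hyx i).symm
    rw [← e.map_fn n f y]
    exact ⟨_, fn_mem_genSet f hy, rfl⟩
  · suffices genSet M s ⊆ e.preimage (genSet N (e.image s)) by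
      rintro _ ⟨x, hx, rfl⟩
      obtain ⟨z, hz, hzx⟩ := this hx
      rwa [← Subtype.ext hzx]
    refine genSet_subset (fun w hw => ⟨⟨w, hs hw⟩, subset_genSet ⟨_, hw, rfl⟩, rfl⟩)
      (preimage_subset_carrier _) fun n f x hx => ?_
    choose y hy hyx using hx
    obtain rfl : x = fun i => (y i : W) := funext fun i => (hyx i).symm
    refine ⟨⟨_, M.fn_mem n f _ fun i => (y i).2⟩, ?_, rfl⟩
    rw [Set.mem_preimage, e.map_fn n f y]
    exact fn_mem_genSet f hy

end Emb

/-! ### Directed systems in an AEC -/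

theorem exists_forall_mem_of_directed {J : Type v} [Preorder J] [IsDirected J (· ≤ ·)]
    [Nonempty J] {C : J → Set W} (hC : Monotone C) {ι : Type*} [Finite ι] {x : ι → W}
    (hx : ∀ i, x i ∈ ⋃ j, C j) : ∃ j, ∀ i, x i ∈ C j := by
  choose j hj using fun i => Set.mem_iUnion.1 (hx i)
  obtain ⟨k, hk⟩ := Finite.exists_le j
  exact ⟨k, fun i => hC (hk i) (hj i)⟩

namespace AEC

variable (A : AEC L W)

theorem mem_of_sub {M N : SetStruct L W} (hM : M ∈ A.K) (h : Sub M N)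
    (h' : N.carrier ⊆ M.carrier) : N ∈ A.K :=
  A.iso_closed h.emb (h.emb_surjective h') hM

/-- `A.le` may depend on the junk values of `fn` and `rel` outside the universe, so `X` has to
share them with `Y` literally. -/
theorem le_congr {M N X Y : SetStruct L W} (h : A.le M N) (hNY : Sub N Y)
    (hYN : Y.carrier ⊆ N.carrier) (hX : X.carrier = M.carrier) (hXf : X.fn = Y.fn)
    (hXr : X.rel = Y.rel) : A.le X Y := by
  convert A.le_iso hNY.emb (hNY.emb_surjective hYN) h using 1
  refine SetStruct.ext' ?_ (fun _ _ _ => by rw [hXf]; rfl) (fun _ _ _ => by rw [hXr]; rfl)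
  rw [hX]
  exact Subtype.range_coe.symm

theorem chain_of_small {J : Type v} [Preorder J] [Small.{u} J] [IsDirected J (· ≤ ·)]
    [Nonempty J] {D : J → SetStruct L W} (hD : ∀ ⦃j j'⦄, j ≤ j' → A.le (D j) (D j')) :
    ∃ MU : SetStruct L W, MU ∈ A.K ∧ MU.carrier = ⋃ j, (D j).carrier ∧
      (∀ j, A.le (D j) MU) ∧ ∀ N : SetStruct L W, (∀ j, A.le (D j) N) → A.le MU N := by
  let e := equivShrink.{u} J
  let _ : Preorder (Shrink.{u} J) := Preorder.lift e.symm
  have hdir : IsDirected (Shrink.{u} J) (· ≤ ·) := ⟨fun a b => by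
    obtain ⟨c, hac, hbc⟩ := directed_of (· ≤ ·) (e.symm a) (e.symm b)
    exact ⟨e c, show e.symm a ≤ e.symm (e c) by simpa using hac,
      show e.symm b ≤ e.symm (e c) by simpa using hbc⟩⟩
  obtain ⟨MU, hK, hcar, hup, hmin⟩ := A.chain ⟨Shrink.{u} J, inferInstance⟩ hdir
    ⟨e (Classical.arbitrary J)⟩ (fun j => D (e.symm j)) fun _ _ h => hD h
  refine ⟨MU, hK, ?_, fun j => by simpa using hup (e j), fun N hN => hmin N fun j => hN _⟩
  rw [hcar]
  exact e.symm.surjective.iUnion_comp fun j => (D j).carrier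

theorem monotone_carrier_of_le {J : Type v} [Preorder J] {D : J → SetStruct L W}
    (hD : ∀ ⦃j j'⦄, j ≤ j' → A.le (D j) (D j')) : Monotone fun j => (D j).carrier :=
  fun _ _ h => (A.le_sub (hD h)).1

variable {J : Type v} [Preorder J] [Small.{u} J] [IsDirected J (· ≤ ·)] [Nonempty J]
  {D : J → SetStruct L W}

theorem le_of_carrier_eq_iUnion (hD : ∀ ⦃j j'⦄, j ≤ j' → A.le (D j) (D j'))
    {N : SetStruct L W} (hDN : ∀ j, A.le (D j) N) {X : SetStruct L W}
    (hX : X.carrier = ⋃ j, (D j).carrier) (hXf : X.fn = N.fn) (hXr : X.rel = N.rel) :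
    A.le X N := by
  obtain ⟨MU, -, hcar, -, hmin⟩ := A.chain_of_small hD
  exact A.le_congr (hmin N hDN) (Sub.refl N) le_rfl (hX.trans hcar.symm) hXf hXr

theorem mem_of_carrier_eq_iUnion (hD : ∀ ⦃j j'⦄, j ≤ j' → A.le (D j) (D j'))
    {Y : SetStruct L W} (hY : Y.carrier = ⋃ j, (D j).carrier) (hDf : ∀ j, (D j).fn = Y.fn)
    (hDr : ∀ j, (D j).rel = Y.rel) : Y ∈ A.K ∧ ∀ j, A.le (D j) Y := by
  obtain ⟨MU, hK, hcar, hup, -⟩ := A.chain_of_small hD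
  have stage {n : ℕ} {x : Fin n → W} (hx : ∀ i, x i ∈ MU.carrier) :
      ∃ j, ∀ i, x i ∈ (D j).carrier :=
    exists_forall_mem_of_directed (A.monotone_carrier_of_le hD) fun i => hcar ▸ hx i
  have hsub : Sub MU Y := by
    refine ⟨hcar.trans hY.symm |>.subset, fun n f x hx => ?_, fun n r x hx => ?_⟩
    · obtain ⟨j, hj⟩ := stage hx
      rw [← (A.le_sub (hup j)).2.1 n f x hj, hDf]
    · obtain ⟨j, hj⟩ := stage hx
      rw [← (A.le_sub (hup j)).2.2 n r x hj, hDr]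
  have hcar' : Y.carrier ⊆ MU.carrier := (hY.trans hcar.symm).subset
  exact ⟨A.mem_of_sub hK hsub hcar',
    fun j => A.le_congr (hup j) hsub hcar' rfl (hDf j) (hDr j)⟩

end AEC

/-! ### Directed colimits -/

namespace AEC

variable {A : AEC L W} {J : Type u} [Preorder J] {G : J ⥤ A.Cat}

theorem le_imageStruct_aecHomEmb {M N : A.Cat} (e : M ⟶ N) :
    A.le (aecHomEmb e).imageStruct N.1 :=
  e.2

theorem cocone_w_apply (s : Cocone G) {j j' : J} (h : j ≤ j') (y : (G.obj j).1.carrier) :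
    (aecHomEmb (s.ι.app j')).toFun ((aecHomEmb (G.map (homOfLE h))).toFun y) =
      (aecHomEmb (s.ι.app j)).toFun y :=
  congrArg (fun g => (aecHomEmb g).toFun y) (s.w (homOfLE h))

def JointlySurjective (c : Cocone G) : Prop :=
  ∀ x : c.pt.1.carrier, ∃ j y, (aecHomEmb (c.ι.app j)).toFun y = x

def JointlySurjective.descFun {c : Cocone G} (hc : JointlySurjective c) (s : Cocone G)
    (x : c.pt.1.carrier) : s.pt.1.carrier :=
  (aecHomEmb (s.ι.app (hc x).choose)).toFun (hc x).choose_spec.choose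

variable [IsDirected J (· ≤ ·)]

theorem cocone_apply_eq_of_apply_eq (c s : Cocone G) {j j' : J} {y : (G.obj j).1.carrier}
    {y' : (G.obj j').1.carrier}
    (h : (aecHomEmb (c.ι.app j)).toFun y = (aecHomEmb (c.ι.app j')).toFun y') :
    (aecHomEmb (s.ι.app j)).toFun y = (aecHomEmb (s.ι.app j')).toFun y' := by
  obtain ⟨k, hjk, hj'k⟩ := directed_of (· ≤ ·) j j'
  rw [← cocone_w_apply c hjk, ← cocone_w_apply c hj'k] at h
  rw [← cocone_w_apply s hjk, ← cocone_w_apply s hj'k, (aecHomEmb (c.ι.app k)).inj h]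

namespace JointlySurjective

variable {c : Cocone G}

theorem descFun_apply (hc : JointlySurjective c) (s : Cocone G) {j : J}
    (y : (G.obj j).1.carrier) :
    hc.descFun s ((aecHomEmb (c.ι.app j)).toFun y) = (aecHomEmb (s.ι.app j)).toFun y :=
  cocone_apply_eq_of_apply_eq c s (hc _).choose_spec.choose_spec

variable [Nonempty J]

theorem exists_stage (hc : JointlySurjective c) {ι : Type*} [Finite ι]
    (x : ι → c.pt.1.carrier) :
    ∃ (k : J) (y : ι → (G.obj k).1.carrier),
      ∀ i, (aecHomEmb (c.ι.app k)).toFun (y i) = x i := by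
  choose j y hy using fun i => hc (x i)
  obtain ⟨k, hk⟩ := Finite.exists_le j
  exact ⟨k, fun i => (aecHomEmb (G.map (homOfLE (hk i)))).toFun (y i),
    fun i => (cocone_w_apply c (hk i) (y i)).trans (hy i)⟩

theorem exists_stage_descFun (hc : JointlySurjective c) (s : Cocone G) {ι : Type*} [Finite ι]
    (x : ι → c.pt.1.carrier) :
    ∃ (k : J) (y : ι → (G.obj k).1.carrier),
      (∀ i, (aecHomEmb (c.ι.app k)).toFun (y i) = x i) ∧
        ∀ i, hc.descFun s (x i) = (aecHomEmb (s.ι.app k)).toFun (y i) := by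
  obtain ⟨k, y, hy⟩ := hc.exists_stage x
  exact ⟨k, y, hy, fun i => hy i ▸ hc.descFun_apply s (y i)⟩

def descEmb (hc : JointlySurjective c) (s : Cocone G) : Emb c.pt.1 s.pt.1 where
  toFun := hc.descFun s
  inj a b hab := by
    obtain ⟨k, y, hy, hs⟩ := hc.exists_stage_descFun s ![a, b]
    have h01 := (aecHomEmb (s.ι.app k)).inj ((hs 0).symm.trans (hab.trans (hs 1)))
    calc a = (aecHomEmb (c.ι.app k)).toFun (y 0) := (hy 0).symm
      _ = (aecHomEmb (c.ι.app k)).toFun (y 1) := by rw [h01]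
      _ = b := hy 1
  map_fn n f x := by
    obtain ⟨k, y, hy, hs⟩ := hc.exists_stage_descFun s x
    have hx : (⟨_, c.pt.1.fn_mem n f _ fun i => (x i).2⟩ : c.pt.1.carrier) =
        (aecHomEmb (c.ι.app k)).toFun ⟨_, (G.obj k).1.fn_mem n f _ fun i => (y i).2⟩ :=
      Subtype.ext (((aecHomEmb (c.ι.app k)).map_fn n f y).trans
        (congrArg (c.pt.1.fn n f) (funext fun i => congrArg Subtype.val (hy i)))).symm
    rw [hx, descFun_apply]
    exact ((aecHomEmb (s.ι.app k)).map_fn n f y).trans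
      (congrArg (s.pt.1.fn n f) (funext fun i => congrArg Subtype.val (hs i).symm))
  map_rel n r x := by
    obtain ⟨k, y, hy, hs⟩ := hc.exists_stage_descFun s x
    have hx : (fun i => (x i : W)) = fun i => ((aecHomEmb (c.ι.app k)).toFun (y i) : W) :=
      funext fun i => congrArg Subtype.val (hy i).symm
    have hsx : (fun i => (hc.descFun s (x i) : W)) =
        fun i => ((aecHomEmb (s.ι.app k)).toFun (y i) : W) :=
      funext fun i => congrArg Subtype.val (hs i)
    rw [hx, hsx]
    exact ((aecHomEmb (c.ι.app k)).map_rel n r y).symm.trans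
      ((aecHomEmb (s.ι.app k)).map_rel n r y)

theorem le_imageStruct_descEmb (hc : JointlySurjective c) (s : Cocone G) :
    A.le (hc.descEmb s).imageStruct s.pt.1 := by
  refine A.le_of_carrier_eq_iUnion (D := fun j => (aecHomEmb (s.ι.app j)).imageStruct)
    (fun j j' h => ?_) (fun j => le_imageStruct_aecHomEmb (s.ι.app j)) ?_ rfl rfl
  · refine A.coherence (Sub.of_subset ?_ rfl rfl) (le_imageStruct_aecHomEmb (s.ι.app j'))
      (le_imageStruct_aecHomEmb (s.ι.app j))
    rintro _ ⟨y, rfl⟩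
    exact ⟨_, congrArg Subtype.val (cocone_w_apply s h y)⟩
  · ext w
    constructor
    · rintro ⟨x, rfl⟩
      obtain ⟨j, y, rfl⟩ := hc x
      exact Set.mem_iUnion.2 ⟨j, y, congrArg Subtype.val (hc.descFun_apply s y).symm⟩
    · intro hw
      obtain ⟨j, y, rfl⟩ := Set.mem_iUnion.1 hw
      exact ⟨_, congrArg Subtype.val (hc.descFun_apply s y)⟩

def isColimit (hc : JointlySurjective c) : IsColimit c where
  desc s := ⟨hc.descEmb s, hc.le_imageStruct_descEmb s⟩
  fac s _ := Subtype.ext (Emb.ext' (funext (hc.descFun_apply s)))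
  uniq s m hm := Subtype.ext (Emb.ext' (funext fun x => by
    obtain ⟨j, y, rfl⟩ := hc x
    exact (congrArg (fun g => (aecHomEmb g).toFun y) (hm j)).trans (hc.descFun_apply s y).symm))

end JointlySurjective

end AEC

namespace UniversalClass

variable {U : UniversalClass L W} {J : Type u} [Preorder J] {D : J ⥤ UnivCat U} (c : Cocone D)

theorem cocone_w_apply {j j' : J} (h : j ≤ j') (y : (D.obj j).1.carrier) :
    (univHomEmb (c.ι.app j')).toFun ((univHomEmb (D.map (homOfLE h))).toFun y) =
      (univHomEmb (c.ι.app j)).toFun y :=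
  congrArg (fun g => (univHomEmb g).toFun y) (c.w (homOfLE h))

variable [IsDirected J (· ≤ ·)] [Nonempty J]

def coconeImage : SetStruct L W where
  carrier := ⋃ j, (univHomEmb (c.ι.app j)).imageStruct.carrier
  small := by
    have := fun j => (univHomEmb (c.ι.app j)).imageStruct.small
    infer_instance
  fn := c.pt.1.fn
  rel := c.pt.1.rel
  fn_mem n f x hx := by
    have hmono : Monotone fun j => (univHomEmb (c.ι.app j)).imageStruct.carrier := by
      rintro j j' h _ ⟨y, rfl⟩
      exact ⟨_, congrArg Subtype.val (cocone_w_apply c h y)⟩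
    obtain ⟨j, hj⟩ := exists_forall_mem_of_directed hmono hx
    exact Set.mem_iUnion.2 ⟨j, (univHomEmb (c.ι.app j)).imageStruct.fn_mem n f x hj⟩

theorem sub_coconeImage : Sub (coconeImage c) c.pt.1 :=
  Sub.of_subset (Set.iUnion_subset fun j => (univHomEmb (c.ι.app j)).imageStruct_sub.1) rfl rfl

theorem imageStruct_sub_coconeImage (j : J) :
    Sub (univHomEmb (c.ι.app j)).imageStruct (coconeImage c) :=
  Sub.of_subset (Set.subset_iUnion (fun j => (univHomEmb (c.ι.app j)).imageStruct.carrier) j)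
    rfl rfl

def coconeImageCocone : Cocone D where
  pt := ⟨coconeImage c, U.sub_closed (sub_coconeImage c) c.pt.2⟩
  ι.app j := (imageStruct_sub_coconeImage c j).emb.comp (univHomEmb (c.ι.app j)).corestrict
  ι.naturality j j' f := Emb.ext' (funext fun y => Subtype.ext <| by
    have := congrArg (fun g => ((univHomEmb g).toFun y : W)) (c.w f)
    exact this)

theorem exists_apply_eq_of_isColimit (hc : IsColimit c) (x : c.pt.1.carrier) :
    ∃ j y, (univHomEmb (c.ι.app j)).toFun y = x := by
  let t := hc.desc (coconeImageCocone c)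
  let incl : (coconeImageCocone c).pt ⟶ c.pt := (sub_coconeImage c).emb
  have ht : t ≫ incl = 𝟙 c.pt :=
    hc.hom_ext fun j => by
      rw [← Category.assoc, hc.fac, Category.comp_id]
      exact Emb.ext' rfl
  obtain ⟨j, y, hy⟩ := Set.mem_iUnion.1 (t.toFun x).2
  refine ⟨j, y, Subtype.ext (hy.trans ?_)⟩
  exact congrArg (fun g => ((univHomEmb g).toFun x : W)) ht

end UniversalClass

/-! ### Structures with coherent pieces -/

abbrev FiniteSubset (c : Set W) : Type (u + 1) :=
  {s : Set W // s ⊆ c ∧ s.Finite}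

namespace FiniteSubset

variable {c : Set W}

instance : IsDirected (FiniteSubset c) (· ≤ ·) :=
  ⟨fun s t => ⟨⟨s.1 ∪ t.1, Set.union_subset s.2.1 t.2.1, s.2.2.union t.2.2⟩,
    Set.subset_union_left, Set.subset_union_right⟩⟩

instance : Nonempty (FiniteSubset c) :=
  ⟨⟨∅, Set.empty_subset c, Set.finite_empty⟩⟩

theorem small (hc : Small.{u} c) : Small.{u} (FiniteSubset c) :=
  small_of_injective (f := fun s : FiniteSubset c => (⟨s.1, s.2.1⟩ : 𝒫 c))
    fun _ _ h => Subtype.ext (congrArg Subtype.val h :)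

theorem iUnion_eq {f : Set W → Set W} (hf : ∀ s ⊆ c, s ⊆ f s)
    (hc : ∀ s ⊆ c, f s ⊆ c) :
    ⋃ s : FiniteSubset c, f s.1 = c := by
  refine (Set.iUnion_subset fun s : FiniteSubset c => hc s.1 s.2.1).antisymm fun w hw => ?_
  have hw' : {w} ⊆ c := Set.singleton_subset_iff.2 hw
  exact Set.mem_iUnion.2 ⟨⟨{w}, hw', Set.finite_singleton w⟩, hf _ hw' rfl⟩

end FiniteSubset

section genReduct

variable {L' : FirstOrder.Language.{u, u}} (φ : L →ᴸ L')

def SetStruct.genReduct (M : SetStruct L' W) (s : Set W) (hs : s ⊆ M.carrier) :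
    SetStruct L W where
  carrier := genSet M s
  small := have := M.small; small_subset (genSet_subset_carrier hs)
  fn := (M.reduct φ).fn
  rel := (M.reduct φ).rel
  fn_mem _ f _ hx := fn_mem_genSet (φ.onFunction f) hx

variable {φ}

theorem iUnion_genSet (M : SetStruct L' W) :
    ⋃ s : FiniteSubset M.carrier, genSet M s.1 = M.carrier :=
  FiniteSubset.iUnion_eq (fun _ _ => subset_genSet) fun _ => genSet_subset_carrier

theorem Sub.genReduct {P Q : SetStruct L' W} (hPQ : Sub P Q) {t : Set W} (ht : t ⊆ P.carrier) :
    Sub (P.genReduct φ t ht) (Q.genReduct φ t (ht.trans hPQ.1)) ∧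
      (Q.genReduct φ t (ht.trans hPQ.1)).carrier = (P.genReduct φ t ht).carrier := by
  have hcar := genSet_eq_of_sub hPQ ht
  refine ⟨⟨hcar.subset, fun n f x hx => ?_, fun n r x hx => ?_⟩, hcar.symm⟩
  · exact hPQ.2.1 n (φ.onFunction f) x fun i => genSet_subset_carrier ht (hx i)
  · exact hPQ.2.2 n (φ.onRelation r) x fun i => genSet_subset_carrier ht (hx i)

theorem AEC.le_genReduct_iff_of_sub (A : AEC L W) {P Q : SetStruct L' W} (hPQ : Sub P Q)
    {s t : Set W} (hst : s ⊆ t) (ht : t ⊆ P.carrier) :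
    A.le (P.genReduct φ s (hst.trans ht)) (P.genReduct φ t ht) ↔
      A.le (Q.genReduct φ s ((hst.trans ht).trans hPQ.1)) (Q.genReduct φ t (ht.trans hPQ.1)) := by
  obtain ⟨hsub, hcar⟩ := hPQ.genReduct (φ := φ) ht
  obtain ⟨-, hcar_s⟩ := hPQ.genReduct (φ := φ) (hst.trans ht)
  exact ⟨fun h => A.le_congr h hsub hcar.subset hcar_s rfl rfl,
    fun h => A.le_congr h (hsub.symm_of_subset hcar.subset) hcar.symm.subset hcar_s.symm rfl rfl⟩

end genReduct

section genReductImage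

variable {L' : FirstOrder.Language.{u, u}} {φ : L →ᴸ L'} {M N : SetStruct L' W} (e : Emb M N)

theorem Emb.mem_genReduct_image {s : Set W} (hs : s ⊆ M.carrier)
    (x : (M.genReduct φ s hs).carrier) :
    (e.toFun ⟨x, genSet_subset_carrier hs x.2⟩ : W) ∈ (N.genReduct φ (e.image s)
      (e.image_subset_carrier s)).carrier := by
  change _ ∈ genSet N (e.image s)
  rw [e.genSet_image hs]
  exact ⟨_, x.2, rfl⟩

def Emb.genReduct {s : Set W} (hs : s ⊆ M.carrier) :
    Emb (M.genReduct φ s hs) (N.genReduct φ (e.image s) (e.image_subset_carrier s)) where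
  toFun x := ⟨_, e.mem_genReduct_image hs x⟩
  inj a b h := by
    have h' : e.toFun ⟨a, genSet_subset_carrier hs a.2⟩ =
        e.toFun ⟨b, genSet_subset_carrier hs b.2⟩ :=
      Subtype.ext (congrArg Subtype.val h :)
    exact Subtype.ext (congrArg Subtype.val (e.inj h') :)
  map_fn n f x :=
    e.map_fn n (φ.onFunction f) fun i => ⟨x i, genSet_subset_carrier hs (x i).2⟩
  map_rel n r x :=
    e.map_rel n (φ.onRelation r) fun i => ⟨x i, genSet_subset_carrier hs (x i).2⟩

theorem Emb.range_genReduct {s : Set W} (hs : s ⊆ M.carrier) :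
    (Set.range fun x => ((e.genReduct (φ := φ) hs).toFun x : W)) = genSet N (e.image s) := by
  rw [e.genSet_image hs]
  ext w
  constructor
  · rintro ⟨x, rfl⟩
    exact ⟨⟨x, genSet_subset_carrier hs x.2⟩, x.2, rfl⟩
  · rintro ⟨x, hx, rfl⟩
    refine ⟨⟨x, hx⟩, ?_⟩
    rfl

theorem AEC.le_genReduct_image (A : AEC L W) {s t : Set W} (hst : s ⊆ t) (ht : t ⊆ M.carrier)
    (h : A.le (M.genReduct φ s (hst.trans ht)) (M.genReduct φ t ht)) :
    A.le (N.genReduct φ (e.image s) (e.image_subset_carrier s))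
      (N.genReduct φ (e.image t) (e.image_subset_carrier t)) := by
  have hsurj : Function.Surjective (e.genReduct (φ := φ) ht).toFun := fun y => by
    have hy : (y : W) ∈ genSet N (e.image t) := y.2
    rw [← e.range_genReduct ht] at hy
    obtain ⟨x, hx⟩ := hy
    exact ⟨x, Subtype.ext hx⟩
  refine A.le_congr (A.le_iso _ hsurj h) (Sub.refl _) le_rfl ?_ rfl rfl
  change genSet N (e.image s) = _
  rw [← e.range_genReduct (hst.trans ht)]
  rfl

end genReductImage

def Emb.reduct {L' : FirstOrder.Language.{u, u}} (φ : L →ᴸ L') {M N : SetStruct L' W}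
    (e : Emb M N) : Emb (M.reduct φ) (N.reduct φ) where
  toFun := e.toFun
  inj := e.inj
  map_fn n f := e.map_fn n (φ.onFunction f)
  map_rel n r := e.map_rel n (φ.onRelation r)

namespace AEC

variable (A : AEC L W) {L' : FirstOrder.Language.{u, u}} (φ : L →ᴸ L')

def CoherentPieces : Set (SetStruct L' W) :=
  {M | ∀ (s t : Set W) (hst : s ⊆ t) (ht : t ⊆ M.carrier), s.Finite → t.Finite →
    A.le (M.genReduct φ s (hst.trans ht)) (M.genReduct φ t ht)}

variable {A φ}

theorem CoherentPieces.le_reduct {M : SetStruct L' W} (hM : M ∈ A.CoherentPieces φ)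
    {s : Set W} (hs : s ⊆ M.carrier) (hsf : s.Finite) :
    A.le (M.genReduct φ s hs) (M.reduct φ) := by
  have := FiniteSubset.small M.small
  exact (A.mem_of_carrier_eq_iUnion
    (D := fun s : FiniteSubset M.carrier => M.genReduct φ s.1 s.2.1)
    (fun s t hst => hM s.1 t.1 hst t.2.1 s.2.2 t.2.2) (iUnion_genSet M).symm
    (fun _ => rfl) fun _ => rfl).2 ⟨s, hs, hsf⟩

theorem CoherentPieces.reduct_mem {M : SetStruct L' W} (hM : M ∈ A.CoherentPieces φ) :
    M.reduct φ ∈ A.K :=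
  (A.le_mem (CoherentPieces.le_reduct hM (Set.empty_subset _) Set.finite_empty)).2

theorem CoherentPieces.of_surjective {M N : SetStruct L' W} (e : Emb M N)
    (he : Function.Surjective e.toFun) (hM : M ∈ A.CoherentPieces φ) :
    N ∈ A.CoherentPieces φ := by
  intro s t hst ht hsf htf
  have h := A.le_genReduct_image e (e.preimage_mono hst) (e.preimage_subset_carrier t)
    (hM _ _ (e.preimage_mono hst) (e.preimage_subset_carrier t) (e.preimage_finite hsf)
      (e.preimage_finite htf))
  simpa only [e.image_preimage he ht, e.image_preimage he (hst.trans ht)] using h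

theorem CoherentPieces.le_imageStruct_reduct {M N : SetStruct L' W}
    (hN : N ∈ A.CoherentPieces φ) (e : Emb M N) :
    A.le (e.reduct φ).imageStruct (N.reduct φ) := by
  have := FiniteSubset.small M.small
  refine A.le_of_carrier_eq_iUnion
    (D := fun s : FiniteSubset M.carrier => N.genReduct φ (e.image s.1) (e.image_subset_carrier _))
    (fun s t hst => hN _ _ (e.image_mono hst) (e.image_subset_carrier _)
      (e.image_finite s.2.2) (e.image_finite t.2.2))
    (fun s => CoherentPieces.le_reduct hN _ (e.image_finite s.2.2)) ?_ rfl rfl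
  change Set.range _ = ⋃ s : FiniteSubset M.carrier, genSet N (e.image s.1)
  rw [Set.iUnion_congr fun s : FiniteSubset M.carrier => e.genSet_image s.2.1, ← e.image_iUnion,
    iUnion_genSet]
  exact e.range_eq_image_carrier

variable (A φ)

def pieceClass : UniversalClass L' W where
  K := A.CoherentPieces φ
  iso_closed := CoherentPieces.of_surjective
  sub_closed hMN hN s t hst ht hsf htf :=
    (A.le_genReduct_iff_of_sub hMN hst ht).2 (hN s t hst (ht.trans hMN.1) hsf htf)
  union_closed P _ _ D hD hmono MU hMU hDMU s t hst ht hsf htf := by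
    have : IsDirected P.J (· ≤ ·) := ‹_›
    have : Nonempty P.J := ‹_›
    have := htf.to_subtype
    obtain ⟨j, hj⟩ := exists_forall_mem_of_directed (C := fun j => (D j).carrier)
      (fun _ _ h => (hmono h).1) (x := fun w : t => (w : W)) fun w => hMU ▸ ht w.2
    have htj : t ⊆ (D j).carrier := fun w hw => hj ⟨w, hw⟩
    exact (A.le_genReduct_iff_of_sub (hDMU j) hst htj).1 (hD j s t hst htj hsf htf)

def reductFunctor : UnivCat (A.pieceClass φ) ⥤ A.Cat where
  obj M := ⟨M.1.reduct φ, CoherentPieces.reduct_mem M.2⟩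
  map {_ N} e := ⟨e.reduct φ, CoherentPieces.le_imageStruct_reduct N.2 e⟩

instance : (A.reductFunctor φ).Faithful where
  map_injective h := Emb.ext' (congrArg (fun e => (aecHomEmb e).toFun) h)

theorem reductFunctor_preservesDirectedColimits :
    PreservesDirectedColimits.{u} (A.reductFunctor φ) := by
  intro J _ _ _
  exact ⟨⟨fun {c} hc =>
    ⟨JointlySurjective.isColimit (UniversalClass.exists_apply_eq_of_isColimit c hc)⟩⟩⟩

end AEC

/-! ### Skolem expansions -/

namespace AEC

variable (A : AEC L W)

theorem lstWitness_LS : LSTWitness L W A.K A.le A.LS :=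
  csInf_mem A.lst

def lsCard : Cardinal.{u} :=
  (Cardinal.lt_univ.mp A.lstWitness_LS.1).choose

theorem lift_lsCard : Cardinal.lift.{u + 1} A.lsCard = A.LS :=
  (Cardinal.lt_univ.mp A.lstWitness_LS.1).choose_spec.symm

def skolemSymbols : FirstOrder.Language.{u, u} where
  Functions _ := A.lsCard.out
  Relations _ := PEmpty

abbrev skolemLang : FirstOrder.Language.{u, u} :=
  L.sum A.skolemSymbols

theorem card_skolemLang :
    Cardinal.lift.{u + 1} A.skolemLang.card = Cardinal.lift.{u + 1} L.card + A.LS := by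
  have hsym : A.skolemSymbols.card = ℵ₀ * A.lsCard := by
    simp [FirstOrder.Language.card_eq_card_functions_add_card_relations, skolemSymbols]
  rw [FirstOrder.Language.card_sum, hsym]
  simp only [Cardinal.lift_id, Cardinal.lift_add, Cardinal.lift_mul, Cardinal.lift_aleph0,
    lift_lsCard]
  rw [Cardinal.mul_eq_right A.lstWitness_LS.2.2.1 A.lstWitness_LS.2.2.1 Cardinal.aleph0_ne_zero]

section skolemHull

variable (X : SetStruct L W) (hX : X ∈ A.K)

/-- Containing the hulls of all proper subsets of `s` makes the hulls monotone in `s`. -/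
def skolemHull (s : Finset W) : SetStruct L W :=
  (A.lstWitness_LS.2.2.2 X hX
    ((↑s ∪ ⋃ t ∈ {t : Finset W | t ⊂ s}, (skolemHull t).carrier) ∩ X.carrier)
    Set.inter_subset_right).choose
termination_by s.card
decreasing_by all_goals exact Finset.card_lt_card (by assumption)

def skolemSeed (s : Finset W) : Set W :=
  (↑s ∪ ⋃ t ∈ {t : Finset W | t ⊂ s}, (A.skolemHull X hX t).carrier) ∩ X.carrier

theorem skolemHull_spec (s : Finset W) :
    A.le (A.skolemHull X hX s) X ∧ A.skolemSeed X hX s ⊆ (A.skolemHull X hX s).carrier ∧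
      #(A.skolemHull X hX s).carrier ≤ #(A.skolemSeed X hX s) + A.LS := by
  rw [skolemHull]
  exact (A.lstWitness_LS.2.2.2 X hX _ Set.inter_subset_right).choose_spec

theorem skolemHull_le (s : Finset W) : A.le (A.skolemHull X hX s) X :=
  (A.skolemHull_spec X hX s).1

theorem skolemHull_subset_carrier (s : Finset W) : (A.skolemHull X hX s).carrier ⊆ X.carrier :=
  (A.le_sub (A.skolemHull_le X hX s)).1

theorem subset_skolemHull (s : Finset W) : ↑s ∩ X.carrier ⊆ (A.skolemHull X hX s).carrier :=
  fun _ hw => (A.skolemHull_spec X hX s).2.1 ⟨Or.inl hw.1, hw.2⟩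

theorem skolemHull_mono {s t : Finset W} (hst : s ⊆ t) :
    (A.skolemHull X hX s).carrier ⊆ (A.skolemHull X hX t).carrier := by
  obtain rfl | hst' := eq_or_ne s t
  · exact le_rfl
  · exact fun w hw => (A.skolemHull_spec X hX t).2.1
      ⟨Or.inr (Set.mem_biUnion (hst.ssubset_of_ne hst') hw),
        A.skolemHull_subset_carrier X hX s hw⟩

theorem skolemHull_le_skolemHull {s t : Finset W} (hst : s ⊆ t) :
    A.le (A.skolemHull X hX s) (A.skolemHull X hX t) :=
  A.coherence (Sub.of_subset_of_sub (A.skolemHull_mono X hX hst)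
      (A.le_sub (A.skolemHull_le X hX s)) (A.le_sub (A.skolemHull_le X hX t)))
    (A.skolemHull_le X hX t) (A.skolemHull_le X hX s)

theorem mk_skolemHull_le (s : Finset W) : #(A.skolemHull X hX s).carrier ≤ A.LS := by
  induction s using Finset.strongInduction with
  | H s ih =>
  have hLS : ℵ₀ ≤ A.LS := A.lstWitness_LS.2.2.1
  set U := ⋃ t ∈ {t : Finset W | t ⊂ s}, (A.skolemHull X hX t).carrier
  have hU : #U ≤ A.LS := by
    have hfin : {t : Finset W | t ⊂ s}.Finite :=
      s.powerset.finite_toSet.subset fun t ht => Finset.mem_powerset.2 ht.subset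
    have hsup : ⨆ t : {t : Finset W | t ⊂ s}, #(A.skolemHull X hX t.1).carrier ≤ A.LS :=
      ciSup_le' fun t => ih t.1 t.2
    calc _ ≤ _ := Cardinal.mk_biUnion_le _ _
      _ ≤ A.LS * A.LS := mul_le_mul' (hfin.lt_aleph0.le.trans hLS) hsup
      _ = A.LS := Cardinal.mul_eq_self hLS
  have hseed : #(A.skolemSeed X hX s) ≤ A.LS :=
    calc _ ≤ #(↑s : Set W) + #U :=
          (Cardinal.mk_le_mk_of_subset Set.inter_subset_left).trans (Cardinal.mk_union_le _ _)
      _ ≤ A.LS + A.LS := add_le_add (s.finite_toSet.lt_aleph0.le.trans hLS) hU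
      _ = A.LS := Cardinal.add_eq_self hLS
  calc _ ≤ _ := (A.skolemHull_spec X hX s).2.2
    _ ≤ A.LS + A.LS := add_le_add hseed le_rfl
    _ = A.LS := Cardinal.add_eq_self hLS

theorem exists_range_eq_skolemHull (hne : ∀ M ∈ A.K, M.carrier.Nonempty) (s : Finset W) :
    ∃ g : A.lsCard.out → W, Set.range g = (A.skolemHull X hX s).carrier := by
  obtain ⟨f⟩ : Nonempty ((A.skolemHull X hX s).carrier ↪ ULift.{u + 1} A.lsCard.out) := by
    rw [← Cardinal.le_def, Cardinal.mk_uLift, Cardinal.mk_out, A.lift_lsCard]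
    exact A.mk_skolemHull_le X hX s
  have := (hne _ (A.le_mem (A.skolemHull_le X hX s)).1).to_subtype
  refine ⟨fun i => (Function.invFun f ⟨i⟩ : (A.skolemHull X hX s).carrier),
    Set.Subset.antisymm ?_ fun w hw => ?_⟩
  · rintro _ ⟨i, rfl⟩
    exact (Function.invFun f ⟨i⟩).2
  · obtain ⟨i, hi⟩ := Function.invFun_surjective f.injective ⟨w, hw⟩
    exact ⟨i.down, congrArg Subtype.val hi⟩

variable (hne : ∀ M ∈ A.K, M.carrier.Nonempty)

def skolemEnum (s : Finset W) : A.lsCard.out → W :=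
  (A.exists_range_eq_skolemHull X hX hne s).choose

theorem range_skolemEnum (s : Finset W) :
    Set.range (A.skolemEnum X hX hne s) = (A.skolemHull X hX s).carrier :=
  (A.exists_range_eq_skolemHull X hX hne s).choose_spec

def skolemExpansion : SetStruct A.skolemLang W where
  carrier := X.carrier
  small := X.small
  fn n
    | Sum.inl f => X.fn n f
    | Sum.inr i => fun x => A.skolemEnum X hX hne (Set.finite_range x).toFinset i
  rel n
    | Sum.inl r => X.rel n r
    | Sum.inr r => r.elim
  fn_mem n f x hx := by
    rcases f with f | i
    · exact X.fn_mem n f x hx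
    · exact A.skolemHull_subset_carrier X hX _
        ((A.range_skolemEnum X hX hne _).subset ⟨i, rfl⟩)

theorem reduct_skolemExpansion :
    (A.skolemExpansion X hX hne).reduct LHom.sumInl = X :=
  SetStruct.ext' rfl (fun _ _ _ => rfl) fun _ _ _ => Iff.rfl

end skolemHull

section skolemExpansion

variable {X : SetStruct L W} (hX : X ∈ A.K) (hne : ∀ M ∈ A.K, M.carrier.Nonempty)

theorem skolemHull_subset_of_closed {G : Set W}
    (hG : ∀ n f x, (∀ i, x i ∈ G) → (A.skolemExpansion X hX hne).fn n f x ∈ G) {b : Set W}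
    (hb : b.Finite) (hbG : b ⊆ G) : (A.skolemHull X hX hb.toFinset).carrier ⊆ G := by
  obtain ⟨n, x, hx⟩ := hb.fin_embedding
  rw [← A.range_skolemEnum X hX hne]
  rintro _ ⟨i, rfl⟩
  have hxb : (Set.finite_range x).toFinset = hb.toFinset := Set.Finite.toFinset_inj.2 hx
  rw [← hxb]
  exact hG n (Sum.inr i) x fun k => hbG (hx ▸ Set.mem_range_self k)

theorem genSet_skolemExpansion {s : Set W} (hs : s ⊆ X.carrier) :
    genSet (A.skolemExpansion X hX hne) s =
      ⋃ b : FiniteSubset (genSet (A.skolemExpansion X hX hne) s),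
        (A.skolemHull X hX b.2.2.toFinset).carrier := by
  set M := A.skolemExpansion X hX hne
  have hull_sub (b : FiniteSubset (genSet M s)) :
      (A.skolemHull X hX b.2.2.toFinset).carrier ⊆ genSet M s :=
    A.skolemHull_subset_of_closed hX hne (fun _ f _ => fn_mem_genSet f) b.2.2 b.2.1
  refine (genSet_subset ?_ ?_ fun n f x hx => ?_).antisymm (Set.iUnion_subset hull_sub)
  · intro w hw
    have hwG : {w} ⊆ genSet M s := Set.singleton_subset_iff.2 (subset_genSet hw)
    exact Set.mem_iUnion.2 ⟨⟨{w}, hwG, Set.finite_singleton w⟩,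
      A.subset_skolemHull X hX _ ⟨by simp, hs hw⟩⟩
  · exact Set.iUnion_subset fun b => A.skolemHull_subset_carrier X hX _
  · have hmono : Monotone fun b : FiniteSubset (genSet M s) =>
        (A.skolemHull X hX b.2.2.toFinset).carrier :=
      fun b b' h => A.skolemHull_mono X hX (Set.Finite.toFinset_subset_toFinset.2 h)
    obtain ⟨b, hb⟩ := exists_forall_mem_of_directed hmono hx
    rcases f with f | i
    · refine Set.mem_iUnion.2 ⟨b, ?_⟩
      change X.fn n f x ∈ _
      rw [← (A.le_sub (A.skolemHull_le X hX _)).2.1 n f x hb]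
      exact (A.skolemHull X hX _).fn_mem n f x hb
    · have hxG : Set.range x ⊆ genSet M s := by
        rintro _ ⟨k, rfl⟩
        exact hull_sub b (hb k)
      exact Set.mem_iUnion.2 ⟨⟨_, hxG, Set.finite_range x⟩,
        (A.range_skolemEnum X hX hne _).subset ⟨i, rfl⟩⟩

theorem genReduct_skolemExpansion_le {s : Set W} (hs : s ⊆ X.carrier) :
    A.le ((A.skolemExpansion X hX hne).genReduct LHom.sumInl s hs) X := by
  have : Small.{u} (A.skolemExpansion X hX hne).carrier := X.small
  have := FiniteSubset.small
    (small_subset (genSet_subset_carrier (N := A.skolemExpansion X hX hne) hs))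
  exact A.le_of_carrier_eq_iUnion
    (D := fun b : FiniteSubset (genSet (A.skolemExpansion X hX hne) s) =>
      A.skolemHull X hX b.2.2.toFinset)
    (fun b b' h => A.skolemHull_le_skolemHull X hX (Set.Finite.toFinset_subset_toFinset.2 h))
    (fun _ => A.skolemHull_le X hX _) (A.genSet_skolemExpansion hX hne hs) rfl rfl

theorem skolemExpansion_mem :
    A.skolemExpansion X hX hne ∈ A.CoherentPieces LHom.sumInl :=
  fun _ _ hst ht _ _ => A.coherence (Sub.of_subset (genSet_mono hst ht) rfl rfl)
    (A.genReduct_skolemExpansion_le hX hne ht)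
    (A.genReduct_skolemExpansion_le hX hne (hst.trans ht))

end skolemExpansion

end AEC

/-- (Shelah's presentation theorem, universal form.)  For every AEC
`A` (in the vocabulary `L`) not containing the empty structure there is an expanded
vocabulary `L'` with `|L'| = |L| + LS(A)` and a universal class `K'` in `L'` such
that the reduct map is a faithful functor from `K'` to `A` preserving directed
colimits and surjective on objects. -/
theorem statement_6 (L : FirstOrder.Language.{u, u}) (W : Type (u + 1)) (A : AEC L W)
    (hne : ∀ M ∈ A.K, M.carrier.Nonempty) :
    ∃ (L' : FirstOrder.Language.{u, u}) (φ : L →ᴸ L'),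
      (∀ n : ℕ, Function.Injective fun f : L.Functions n => φ.onFunction f) ∧
      (∀ n : ℕ, Function.Injective fun r : L.Relations n => φ.onRelation r) ∧
      Cardinal.lift.{u + 1} L'.card = Cardinal.lift.{u + 1} L.card + A.LS ∧
      ∃ (U : UniversalClass L' W) (F : UnivCat U ⥤ A.Cat),
        (∀ M' : UnivCat U, (F.obj M').1 = SetStruct.reduct φ M'.1) ∧
        (∀ (M' N' : UnivCat U) (e : M' ⟶ N')
            (x : (F.obj M').1.carrier) (y : M'.1.carrier), (x : W) = (y : W) →
            ((aecHomEmb (F.map e)).toFun x : W) = ((univHomEmb e).toFun y : W)) ∧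
        F.Faithful ∧ (∀ X : A.Cat, ∃ M' : UnivCat U, F.obj M' = X) ∧
        PreservesDirectedColimits.{u} F := by
  refine ⟨A.skolemLang, LHom.sumInl, fun _ => Sum.inl_injective, fun _ => Sum.inl_injective,
    A.card_skolemLang, A.pieceClass LHom.sumInl, A.reductFunctor LHom.sumInl, fun _ => rfl,
    fun _ _ e x y hxy => ?_, inferInstance, fun X => ?_,
    A.reductFunctor_preservesDirectedColimits LHom.sumInl⟩
  · obtain rfl : x = y := Subtype.ext hxy
    rfl
  · exact ⟨⟨A.skolemExpansion X.1 X.2 hne, A.skolemExpansion_mem X.2 hne⟩,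
      Subtype.ext (A.reduct_skolemExpansion X.1 X.2 hne)⟩

end Paper
end
end

section
/- Let K be an abstract elementary class admitting intersections. If M ∈ K is finitely generated, i.e. there is a finite set A ⊆ UM with M = cl^M(A), then M is an ℵ₀-presentable object of the category K (the hom-functor K(M,−) preserves directed colimits). -/
universe u v w

open CategoryTheory CategoryTheory.Limits Cardinal FirstOrder

noncomputable section

namespace Paper

/-! ## Classes of structures in a finitary vocabulary

A `SetStruct L W` is a `τ`-structure (for the finitary first-order vocabulary `L`)
whose universe is a small subset of the ambient class `W` of elements.  The
interpretations of function and relation symbols are given as total functions on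
tuples from `W` (their values outside the universe are irrelevant junk), so that the
substructure relation can be taken literally. -/

variable (L : FirstOrder.Language.{u, u}) (W : Type (u + 1))

variable {L W}

/-! ## Universal classes -/

variable (L W)

variable {L W}

/-! ## Abstract elementary classes -/

variable (L W)

variable {L W}

/-! ### Auxiliary material for Statement 9 -/

theorem imageStruct_eq_of_range {M M' N : SetStruct L W} (e : Emb M N) (e' : Emb M' N)
    (h : (Set.range fun x => (e.toFun x : W)) = Set.range fun x => (e'.toFun x : W)) :
    e.imageStruct = e'.imageStruct :=
  SetStruct.ext' h (fun _ _ _ => rfl) (fun _ _ _ => Iff.rfl)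

theorem range_subEmb {M N : SetStruct L W} (h : Sub M N) :
    (Set.range fun x => ((Sub.emb h).toFun x : W)) = M.carrier := by
  ext w
  constructor
  · rintro ⟨x, rfl⟩; exact x.2
  · intro hw; exact ⟨⟨w, hw⟩, rfl⟩

theorem AEC.le_subEmb (A : AEC L W) {M N : SetStruct L W} (h : A.le M N) :
    A.le (Sub.emb (A.le_sub h)).imageStruct N := by
  have h2 := A.le_iso (Emb.refl N) (fun y => ⟨y, rfl⟩) h
  rwa [imageStruct_eq_of_range (Emb.comp (Emb.refl N) (Sub.emb (A.le_sub h)))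
    (Sub.emb (A.le_sub h)) rfl] at h2

/-- The inverse of a surjective (hence bijective) embedding. -/
def Emb.invOfSurj {M N : SetStruct L W} (e : Emb M N) (hs : Function.Surjective e.toFun) :
    Emb N M where
  toFun := (Equiv.ofBijective e.toFun ⟨e.inj, hs⟩).symm
  inj := (Equiv.ofBijective e.toFun ⟨e.inj, hs⟩).symm.injective
  map_fn := by
    intro n f x
    set q := Equiv.ofBijective e.toFun ⟨e.inj, hs⟩ with hq
    set m : M.carrier := ⟨M.fn n f fun i => ((q.symm (x i) : M.carrier) : W),
      M.fn_mem n f _ fun i => (q.symm (x i)).2⟩ with hm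
    have key : e.toFun m =
        ⟨N.fn n f fun i => ((x i : N.carrier) : W), N.fn_mem n f _ fun i => (x i).2⟩ := by
      apply Subtype.ext
      have h1 := e.map_fn n f fun i => q.symm (x i)
      have h2 : (fun i => (e.toFun (q.symm (x i)) : W)) = fun i => ((x i : N.carrier) : W) :=
        funext fun i => congrArg Subtype.val (q.apply_symm_apply (x i))
      rw [hm]
      calc (e.toFun ⟨M.fn n f fun i => ((q.symm (x i) : M.carrier) : W),
              M.fn_mem n f _ fun i => (q.symm (x i)).2⟩ : W)
          = N.fn n f fun i => (e.toFun (q.symm (x i)) : W) := h1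
        _ = N.fn n f fun i => ((x i : N.carrier) : W) := by rw [h2]
    have h3 : q.symm (e.toFun m) = m := q.symm_apply_apply m
    rw [key] at h3
    exact congrArg Subtype.val h3
  map_rel := by
    intro n r x
    set q := Equiv.ofBijective e.toFun ⟨e.inj, hs⟩ with hq
    have h1 := e.map_rel n r fun i => q.symm (x i)
    have h2 : (fun i => (e.toFun (q.symm (x i)) : W)) = fun i => ((x i : N.carrier) : W) :=
      funext fun i => congrArg Subtype.val (q.apply_symm_apply (x i))
    rw [h2] at h1
    exact h1.symm

theorem Emb.apply_invOfSurj {M N : SetStruct L W} (e : Emb M N)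
    (hs : Function.Surjective e.toFun) (y : N.carrier) :
    e.toFun ((e.invOfSurj hs).toFun y) = y :=
  (Equiv.ofBijective e.toFun ⟨e.inj, hs⟩).apply_symm_apply y

theorem Emb.invOfSurj_apply {M N : SetStruct L W} (e : Emb M N)
    (hs : Function.Surjective e.toFun) (x : M.carrier) :
    (e.invOfSurj hs).toFun (e.toFun x) = x :=
  (Equiv.ofBijective e.toFun ⟨e.inj, hs⟩).symm_apply_apply x

theorem Emb.invOfSurj_surj {M N : SetStruct L W} (e : Emb M N)
    (hs : Function.Surjective e.toFun) :
    Function.Surjective (e.invOfSurj hs).toFun :=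
  fun x => ⟨e.toFun x, e.invOfSurj_apply hs x⟩

/-- Key closure-transfer lemma: if `M` is generated by `s` (i.e. `cl^M(s) = M`) and
`e : M → N` is a `K`-embedding, then the image of `M` is contained in every strong
substructure `P ≤ N` containing the image of `s`. -/
theorem cl_image_subset (A : AEC L W) (hi : A.AdmitsIntersections)
    {M N : SetStruct L W} (hN : N ∈ A.K) (e : Emb M N)
    (he : A.le e.imageStruct N) {s : Set W} (hs : s ⊆ M.carrier)
    (hcl : A.clSet M s = M.carrier) {P : SetStruct L W} (hP : A.le P N)
    (hsP : ∀ x : M.carrier, (x : W) ∈ s → (e.toFun x : W) ∈ P.carrier) :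
    e.imageStruct.carrier ⊆ P.carrier := by
  classical
  set s' : Set W := {w | ∃ x : M.carrier, (x : W) ∈ s ∧ (e.toFun x : W) = w} with hs'def
  have hs'P : s' ⊆ P.carrier := by rintro w ⟨x, hx, rfl⟩; exact hsP x hx
  have hs'F : s' ⊆ e.imageStruct.carrier := by rintro w ⟨x, hx, rfl⟩; exact ⟨x, rfl⟩
  have hs'N : s' ⊆ N.carrier := hs'P.trans (A.le_sub hP).1
  obtain ⟨C, hCN, hCc⟩ := hi N hN s' hs'N
  have hclsub : ∀ Q : SetStruct L W, A.le Q N → s' ⊆ Q.carrier →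
      A.clSet N s' ⊆ Q.carrier := fun Q h1 h2 =>
    Set.biInter_subset_of_mem (show Q ∈ {Q : SetStruct L W | A.le Q N ∧ s' ⊆ Q.carrier}
      from ⟨h1, h2⟩)
  have hCP : C.carrier ⊆ P.carrier := hCc ▸ hclsub P hP hs'P
  have hCF : C.carrier ⊆ e.imageStruct.carrier := hCc ▸ hclsub _ he hs'F
  have hs'C : s' ⊆ C.carrier := by
    rw [hCc]
    exact Set.subset_iInter₂ fun Q hQ => hQ.2
  have subCF : Sub C e.imageStruct :=
    ⟨hCF, fun n f x hx => (A.le_sub hCN).2.1 n f x hx,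
      fun n r x hx => (A.le_sub hCN).2.2 n r x hx⟩
  have hCleF : A.le C e.imageStruct := A.coherence subCF he hCN
  have hC' := A.le_iso (e.corestrict.invOfSurj e.corestrict_surjective)
    (Emb.invOfSurj_surj _ _) hCleF
  set einv := e.corestrict.invOfSurj e.corestrict_surjective with heinv
  set C' := (Emb.comp einv (Sub.emb (A.le_sub hCleF))).imageStruct with hC'def
  have hsC' : s ⊆ C'.carrier := by
    intro w hw
    have hz : ((e.corestrict.toFun ⟨w, hs hw⟩ : e.imageStruct.carrier) : W) ∈ s' :=
      ⟨⟨w, hs hw⟩, hw, rfl⟩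
    refine ⟨⟨_, hs'C hz⟩, ?_⟩
    show (einv.toFun ((Sub.emb (A.le_sub hCleF)).toFun ⟨_, hs'C hz⟩) : W) = w
    have h3 : (Sub.emb (A.le_sub hCleF)).toFun ⟨_, hs'C hz⟩ =
        e.corestrict.toFun ⟨w, hs hw⟩ := Subtype.ext rfl
    rw [h3, Emb.invOfSurj_apply]
  have hMC' : M.carrier ⊆ C'.carrier := by
    rw [← hcl]
    exact Set.biInter_subset_of_mem
      (show C' ∈ {Q : SetStruct L W | A.le Q M ∧ s ⊆ Q.carrier} from ⟨hC', hsC'⟩)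
  rintro w ⟨x, rfl⟩
  obtain ⟨y, hy⟩ := hMC' x.2
  have hy' : einv.toFun ((Sub.emb (A.le_sub hCleF)).toFun y) = x := Subtype.ext hy
  have h6 := congrArg e.corestrict.toFun hy'
  rw [Emb.apply_invOfSurj] at h6
  have h7 : (y : W) = (e.toFun x : W) := congrArg Subtype.val h6
  show (e.toFun x : W) ∈ P.carrier
  rw [← h7]
  exact hCP y.2

/-- In an AEC admitting intersections, every finitely generated
member is an `ℵ₀`-presentable object of the associated category. -/
theorem statement_9 (L : FirstOrder.Language.{u, u}) (W : Type (u + 1)) (A : AEC L W)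
    (hi : A.AdmitsIntersections) (M : SetStruct L W) (hM : M ∈ A.K)
    (hfg : ∃ s : Set W, s.Finite ∧ s ⊆ M.carrier ∧ A.clSet M s = M.carrier) :
    IsCardPresentable.{u} (C := A.Cat) (ℵ₀ : Cardinal.{u}) ⟨M, hM⟩ := by
  classical
  intro J instJ hJ D c hc
  have hne : Nonempty J := by
    obtain ⟨j, -⟩ := hJ ∅ (by rw [Cardinal.mk_emptyCollection]; exact Cardinal.aleph0_pos)
    exact ⟨j⟩
  have hdir : IsDirected J (· ≤ ·) := by
    constructor
    intro a b
    obtain ⟨j, hj⟩ := hJ {a, b} ((Set.Finite.insert a (Set.finite_singleton b)).lt_aleph0)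
    exact ⟨j, hj a (by simp), hj b (by simp)⟩
  set emb : ∀ j : J, Emb (D.obj j).1 c.pt.1 := fun j => aecHomEmb (c.ι.app j) with hembdef
  set Im : J → SetStruct L W := fun j => (emb j).imageStruct with hImdef
  have hImle : ∀ j, A.le (Im j) c.pt.1 := fun j => (c.ι.app j).2
  have hfact : ∀ {j j' : J} (h : j ≤ j') (x : (D.obj j).1.carrier),
      (emb j).toFun x = (emb j').toFun ((aecHomEmb (D.map (homOfLE h))).toFun x) := by
    intro j j' h x
    exact (congrArg (fun k : D.obj j ⟶ c.pt => (aecHomEmb k).toFun x) (c.w (homOfLE h))).symm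
  have hmono : ∀ {j j' : J}, j ≤ j' → (Im j).carrier ⊆ (Im j').carrier := by
    intro j j' h w hw
    obtain ⟨x, rfl⟩ := hw
    exact ⟨(aecHomEmb (D.map (homOfLE h))).toFun x, (congrArg Subtype.val (hfact h x)).symm⟩
  have hImleIm : ∀ ⦃j j' : J⦄, j ≤ j' → A.le (Im j) (Im j') := fun j j' h =>
    A.coherence ⟨hmono h, fun _ _ _ _ => rfl, fun _ _ _ _ => Iff.rfl⟩ (hImle j') (hImle j)
  obtain ⟨MU, hMUK, hMUc, hMUle, hMUmin⟩ :=
    A.chain ⟨J, instJ⟩ hdir hne Im hImleIm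
  have hMUcpt : A.le MU c.pt.1 := hMUmin c.pt.1 hImle
  have hembU : ∀ j : J,
      A.le (Emb.comp (Sub.emb (A.le_sub (hMUle j))) (emb j).corestrict).imageStruct MU := by
    intro j
    have hr : (Set.range fun x =>
          ((Emb.comp (Sub.emb (A.le_sub (hMUle j))) (emb j).corestrict).toFun x : W))
        = Set.range fun x => ((Sub.emb (A.le_sub (hMUle j))).toFun x : W) := by
      rw [range_subEmb]
      rfl
    rw [imageStruct_eq_of_range _ _ hr]
    exact A.le_subEmb (hMUle j)
  set cU : Cocone D :=
    { pt := ⟨MU, hMUK⟩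
      ι :=
        { app := fun j => ⟨Emb.comp (Sub.emb (A.le_sub (hMUle j))) (emb j).corestrict, hembU j⟩
          naturality := by
            intro j j' η
            apply Subtype.ext
            apply Emb.ext'
            funext x
            apply Subtype.ext
            show ((emb j').toFun ((aecHomEmb (D.map η)).toFun x) : W) = ((emb j).toFun x : W)
            have hη : η = homOfLE (leOfHom η) := rfl
            rw [hη]
            exact (congrArg Subtype.val (hfact (leOfHom η) x)).symm } } with hcUdef
  have hcover : ∀ w : c.pt.1.carrier, (w : W) ∈ MU.carrier := by
    have hum : hc.desc cU ≫
        (⟨Sub.emb (A.le_sub hMUcpt), A.le_subEmb hMUcpt⟩ : cU.pt ⟶ c.pt) = 𝟙 c.pt := by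
      apply hc.hom_ext
      intro j
      simp only [Category.comp_id]
      rw [← Category.assoc, hc.fac]
      apply Subtype.ext
      apply Emb.ext'
      funext x
      apply Subtype.ext
      rfl
    intro w
    have h2 : ((aecHomEmb (hc.desc cU)).toFun w : W) = (w : W) :=
      congrArg (fun k : c.pt ⟶ c.pt => ((aecHomEmb k).toFun w : W)) hum
    rw [← h2]
    exact ((aecHomEmb (hc.desc cU)).toFun w).2
  constructor
  · -- existence of a factorization
    intro f
    obtain ⟨s, sfin, hsM, hclM⟩ := hfg
    set ef : Emb M c.pt.1 := (f : {e : Emb M c.pt.1 // A.le e.imageStruct c.pt.1}).1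
      with hefdef
    set t : Set W := {w | ∃ x : M.carrier, (x : W) ∈ s ∧ (ef.toFun x : W) = w} with htdef
    have tfin : t.Finite := by
      have ht2 : t = (fun x : M.carrier => (ef.toFun x : W)) '' (Subtype.val ⁻¹' s) := by
        ext w
        constructor
        · rintro ⟨x, hx, rfl⟩; exact ⟨x, hx, rfl⟩
        · rintro ⟨x, hx, rfl⟩; exact ⟨x, hx, rfl⟩
      rw [ht2]
      exact (sfin.preimage Subtype.coe_injective.injOn).image _
    have hch : ∀ w : ↥t, ∃ jw : J, (w : W) ∈ (Im jw).carrier := by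
      intro w
      have h0 : (w : W) ∈ MU.carrier := by
        obtain ⟨x, hx, hxw⟩ := w.2
        rw [← hxw]
        exact hcover (ef.toFun x)
      rw [hMUc] at h0
      simpa using h0
    choose idx hidx using hch
    haveI : Finite ↥t := tfin.to_subtype
    obtain ⟨j, hj⟩ := hJ (Set.range idx) (Set.Finite.lt_aleph0 (Set.finite_range idx))
    have htj : t ⊆ (Im j).carrier := fun w hw =>
      hmono (hj (idx ⟨w, hw⟩) ⟨⟨w, hw⟩, rfl⟩) (hidx ⟨w, hw⟩)
    have hFsub : ef.imageStruct.carrier ⊆ (Im j).carrier :=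
      cl_image_subset A hi c.pt.2 ef f.2 hsM hclM (hImle j)
        (fun x hx => htj ⟨x, hx, rfl⟩)
    set invj := (emb j).corestrict.invOfSurj (emb j).corestrict_surjective with hinvjdef
    set h' : Emb M (Im j) :=
      { toFun := fun x => ⟨(ef.toFun x : W), hFsub ⟨x, rfl⟩⟩
        inj := by
          intro a b hab
          apply ef.inj
          apply Subtype.ext
          have hv := congrArg Subtype.val hab
          simpa using hv
        map_fn := fun n fn x => ef.map_fn n fn x
        map_rel := fun n r x => ef.map_rel n r x } with hh'def
    set gEmb := Emb.comp invj h' with hgdef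
    have hFIm : A.le ef.imageStruct (Im j) :=
      A.coherence ⟨hFsub, fun _ _ _ _ => rfl, fun _ _ _ _ => Iff.rfl⟩ (hImle j) f.2
    have h2 := A.le_iso invj (Emb.invOfSurj_surj _ _) hFIm
    have hr : (Set.range fun y => ((Emb.comp invj (Sub.emb (A.le_sub hFIm))).toFun y : W))
        = Set.range fun x => (gEmb.toFun x : W) := by
      ext w
      constructor
      · rintro ⟨y, rfl⟩
        obtain ⟨x, hx⟩ := y.2
        refine ⟨x, ?_⟩
        show (invj.toFun (h'.toFun x) : W) =
          (invj.toFun ((Sub.emb (A.le_sub hFIm)).toFun y) : W)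
        apply congrArg Subtype.val
        apply congrArg
        exact Subtype.ext hx
      · rintro ⟨x, rfl⟩
        refine ⟨⟨(ef.toFun x : W), ⟨x, rfl⟩⟩, ?_⟩
        show (invj.toFun ((Sub.emb (A.le_sub hFIm)).toFun ⟨(ef.toFun x : W), ⟨x, rfl⟩⟩) : W)
          = (invj.toFun (h'.toFun x) : W)
        apply congrArg Subtype.val
        apply congrArg
        exact Subtype.ext rfl
    rw [imageStruct_eq_of_range _ _ hr] at h2
    refine ⟨j, ⟨gEmb, h2⟩, ?_⟩
    apply Subtype.ext
    apply Emb.ext'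
    funext x
    apply Subtype.ext
    show ((emb j).toFun (invj.toFun (h'.toFun x)) : W) = (ef.toFun x : W)
    have h4 := (emb j).corestrict.apply_invOfSurj (emb j).corestrict_surjective (h'.toFun x)
    have h5 := congrArg Subtype.val h4
    exact h5
  · -- embeddings into a stage agreeing at the colimit agree already
    intro j g₁ g₂ hgg
    refine ⟨j, le_refl j, ?_⟩
    have h1 : g₁ = g₂ := by
      apply Subtype.ext
      apply Emb.ext'
      funext x
      apply (aecHomEmb (c.ι.app j)).inj
      have hv := congrArg (fun k => (aecHomEmb k).toFun x) hgg
      exact hv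
    rw [h1]


end Paper
end
end

section
/- Let K be an abstract elementary class admitting intersections, and let N ∈ K, A ⊆ UN, and B ⊆ cl^N(A) with B finite. Then there exists a finite subset A₀ ⊆ A such that B ⊆ cl^N(A₀). -/
universe u v w

open CategoryTheory CategoryTheory.Limits Cardinal FirstOrder

noncomputable section

namespace Paper

/-! ## Classes of structures in a finitary vocabulary

A `SetStruct L W` is a `τ`-structure (for the finitary first-order vocabulary `L`)
whose universe is a small subset of the ambient class `W` of elements.  The
interpretations of function and relation symbols are given as total functions on
tuples from `W` (their values outside the universe are irrelevant junk), so that the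
substructure relation can be taken literally. -/

variable (L : FirstOrder.Language.{u, u}) (W : Type (u + 1))

variable {L W}

/-! ## Universal classes -/

variable (L W)

variable {L W}

/-! ## Abstract elementary classes -/

variable (L W)

variable {L W}

theorem Sub.of_carrier_subset {M M' N : SetStruct L W} (hM : Sub M N) (hM' : Sub M' N)
    (h : M.carrier ⊆ M'.carrier) : Sub M M' :=
  ⟨h,
   fun n f x hx => (hM.2.1 n f x hx).trans (hM'.2.1 n f x fun i => h (hx i)).symm,
   fun n r x hx => (hM.2.2 n r x hx).trans (hM'.2.2 n r x fun i => h (hx i)).symm⟩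

namespace AEC

variable (A : AEC L W) {N : SetStruct L W}

theorem le_of_carrier_subset {M M' : SetStruct L W} (hM : A.le M N) (hM' : A.le M' N)
    (h : M.carrier ⊆ M'.carrier) : A.le M M' :=
  A.coherence ((A.le_sub hM).of_carrier_subset (A.le_sub hM') h) hM' hM

theorem subset_clSet (s : Set W) : s ⊆ A.clSet N s :=
  fun _ hx => Set.mem_iInter₂.2 fun _ hM => hM.2 hx

theorem clSet_mono {s t : Set W} (h : s ⊆ t) : A.clSet N s ⊆ A.clSet N t :=
  fun _ hx => Set.mem_iInter₂.2 fun M hM => Set.mem_iInter₂.1 hx M ⟨hM.1, h.trans hM.2⟩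

theorem clSet_subset_of_le {M : SetStruct L W} {s : Set W} (hM : A.le M N)
    (hs : s ⊆ M.carrier) : A.clSet N s ⊆ M.carrier :=
  Set.biInter_subset_of_mem (⟨hM, hs⟩ : M ∈ {M : SetStruct L W | A.le M N ∧ s ⊆ M.carrier})

/-- Strong substructures of `N` with increasing universes form a `≤`-chain by coherence,
so the chain axiom applies. -/
theorem exists_le_carrier_eq_iUnion {J : Type u} [Preorder J] [IsDirected J (· ≤ ·)]
    [Nonempty J] (D : J → SetStruct L W) (hD : ∀ j, A.le (D j) N)
    (hmono : Monotone fun j => (D j).carrier) :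
    ∃ M : SetStruct L W, A.le M N ∧ M.carrier = ⋃ j, (D j).carrier := by
  obtain ⟨M, -, hcarrier, -, hlub⟩ := A.chain ⟨J, inferInstance⟩ inferInstance inferInstance D
    fun j j' h => A.le_of_carrier_subset (hD j) (hD j') (hmono h)
  exact ⟨M, hlub N hD, hcarrier⟩

/-- The closures of the finite subsets of `s` form a directed system of strong
substructures of `N`; its union contains `s` and is strong in `N`, hence contains
`cl^N(s)`. The index set is `Finset (Shrink s)` because the chain axiom only
accepts index types in universe `u`. -/
theorem exists_finite_mem_clSet (hi : A.AdmitsIntersections) (hN : N ∈ A.K) {s : Set W}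
    (hs : s ⊆ N.carrier) {b : W} (hb : b ∈ A.clSet N s) :
    ∃ t ⊆ s, t.Finite ∧ b ∈ A.clSet N t := by
  have : Small.{u} s := @small_subset _ _ _ hs N.small
  let f : Shrink.{u} s → W := fun x => ((equivShrink s).symm x : W)
  have hf : ∀ j : Finset (Shrink.{u} s), f '' j ⊆ s := by
    rintro j _ ⟨x, -, rfl⟩
    exact ((equivShrink s).symm x).2
  choose D hDN hD using fun j : Finset (Shrink.{u} s) => hi N hN (f '' j) ((hf j).trans hs)
  have hmono : Monotone fun j => (D j).carrier := by
    intro j j' h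
    simp only [hD]
    exact A.clSet_mono (Set.image_mono (Finset.coe_subset.2 h))
  obtain ⟨M, hMN, hM⟩ := A.exists_le_carrier_eq_iUnion D hDN hmono
  have hsM : s ⊆ M.carrier := by
    intro a ha
    have ha' : a ∈ f '' ({equivShrink s ⟨a, ha⟩} : Finset _) :=
      ⟨equivShrink s ⟨a, ha⟩, by simp, by simp [f]⟩
    rw [hM]
    exact Set.mem_iUnion.2 ⟨_, (hD _).symm ▸ A.subset_clSet _ ha'⟩
  have hbM := A.clSet_subset_of_le hMN hsM hb
  rw [hM] at hbM
  obtain ⟨j, hbj⟩ := Set.mem_iUnion.1 hbM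
  exact ⟨f '' j, hf j, j.finite_toSet.image f, hD j ▸ hbj⟩

end AEC

/-- (Local character.) In an AEC admitting intersections, every
finite subset of `cl^N(s)` is contained in `cl^N(s₀)` for some finite `s₀ ⊆ s`. -/
theorem statement_11 (L : FirstOrder.Language.{u, u}) (W : Type (u + 1)) (A : AEC L W)
    (hi : A.AdmitsIntersections) (N : SetStruct L W) (hN : N ∈ A.K)
    (s : Set W) (hs : s ⊆ N.carrier)
    (B : Set W) (hB : B ⊆ A.clSet N s) (hBfin : B.Finite) :
    ∃ s₀ : Set W, s₀ ⊆ s ∧ s₀.Finite ∧ B ⊆ A.clSet N s₀ := by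
  choose! t hts htfin hbt using fun b (hb : b ∈ B) => A.exists_finite_mem_clSet hi hN hs (hB hb)
  refine ⟨⋃ b ∈ B, t b, Set.iUnion₂_subset hts, hBfin.biUnion htfin, fun b hb => ?_⟩
  exact A.clSet_mono (Set.subset_biUnion_of_mem hb) (hbt b hb)

end Paper
end
end

section
/- Let K be a pseudo-universal abstract elementary class and let f, g : M → N be K-embeddings. Then A := {x ∈ UM : f(x) = g(x)} satisfies A = cl^M(A), so A is the universe of a ≤_K-substructure of M, and the restriction f↾A, as a K-embedding from this substructure into N, is an equalizer of f and g in the category K. -/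
universe u v w

open CategoryTheory CategoryTheory.Limits Cardinal FirstOrder

noncomputable section

namespace Paper

/-! ## Classes of structures in a finitary vocabulary

A `SetStruct L W` is a `τ`-structure (for the finitary first-order vocabulary `L`)
whose universe is a small subset of the ambient class `W` of elements.  The
interpretations of function and relation symbols are given as total functions on
tuples from `W` (their values outside the universe are irrelevant junk), so that the
substructure relation can be taken literally. -/

variable (L : FirstOrder.Language.{u, u}) (W : Type (u + 1))

variable {L W}

/-! ## Universal classes -/

variable (L W)

variable {L W}

/-! ## Abstract elementary classes -/

variable (L W)

variable {L W}

/-- The inclusion embedding of a strong substructure is a K-embedding. -/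
theorem le_incl_image (A : AEC L W) {M₀ N₁ : SetStruct L W} (h : A.le M₀ N₁) :
    A.le (Sub.emb (A.le_sub h)).imageStruct N₁ := by
  have h2 := A.le_iso (Emb.refl N₁) (fun x => ⟨x, rfl⟩) h
  have he : (Emb.comp (Emb.refl N₁) (Sub.emb (A.le_sub h))).imageStruct =
      (Sub.emb (A.le_sub h)).imageStruct :=
    SetStruct.ext' rfl (fun _ _ _ => rfl) (fun _ _ _ => Iff.rfl)
  rwa [he] at h2

/-- In a pseudo-universal AEC, for K-embeddings `f g : M ⟶ N` the
set `s = {x ∈ UM : f x = g x}` equals `cl^M(s)`, hence is the universe of a strong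
substructure `M₀ ≤_K M`, and the inclusion of `M₀`, as a K-embedding into `M`, is an
equalizer of `f` and `g` in the category of the AEC. -/
theorem statement_13 (L : FirstOrder.Language.{u, u}) (W : Type (u + 1)) (A : AEC L W)
    (hpu : A.PseudoUniversal) (M N : A.Cat) (f g : M ⟶ N) :
    ∀ s : Set W,
      s = {y : W | ∃ h : y ∈ M.1.carrier,
            (aecHomEmb f).toFun ⟨y, h⟩ = (aecHomEmb g).toFun ⟨y, h⟩} →
      s = A.clSet M.1 s ∧
      ∃ (M₀ : A.Cat) (ι : M₀ ⟶ M),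
        M₀.1.carrier = s ∧
        (∀ x : M₀.1.carrier, ((aecHomEmb ι).toFun x : W) = (x : W)) ∧
        ∃ w : ι ≫ f = ι ≫ g, Nonempty (IsLimit (Fork.ofι ι w)) := by
  intro s hs
  have hsub : s ⊆ M.1.carrier := by
    intro y hy; rw [hs] at hy; exact hy.1
  have hagree : ∀ x : M.1.carrier, (x : W) ∈ s →
      (aecHomEmb f).toFun x = (aecHomEmb g).toFun x := by
    intro x hx
    rw [hs] at hx
    obtain ⟨h, hfg⟩ := hx
    exact hfg
  have hcl : s = A.clSet M.1 s := by
    apply Set.Subset.antisymm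
    · intro y hy; exact Set.mem_iInter₂.2 fun P hP => hP.2 hy
    · intro y hy
      have hyM : y ∈ M.1.carrier := A.clSet_subset M.2 hsub hy
      have hfg := hpu.2 M.1 N.1 M.2 N.2 (aecHomEmb f) (aecHomEmb g) f.2 g.2 s hsub
        hagree ⟨y, hyM⟩ hy
      rw [hs]; exact ⟨hyM, hfg⟩
  refine ⟨hcl, ?_⟩
  obtain ⟨M₀', hle, hcar⟩ := hpu.1 M.1 M.2 s hsub
  have hcar' : M₀'.carrier = s := hcar.trans hcl.symm
  refine ⟨⟨M₀', (A.le_mem hle).1⟩, ⟨Sub.emb (A.le_sub hle), le_incl_image A hle⟩,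
    hcar', fun x => rfl, ?_, ?_⟩
  · apply Subtype.ext
    apply Emb.ext'
    funext x
    have hxs : (x : W) ∈ s := hcar' ▸ x.2
    rw [hs] at hxs
    obtain ⟨h, hfg⟩ := hxs
    exact hfg
  · refine ⟨Fork.IsLimit.mk' _ fun c => ?_⟩
    -- the underlying embedding of the fork map
    set tι : Emb c.pt.1 M.1 := aecHomEmb c.ι with htι
    have hrange : ∀ x : c.pt.1.carrier, (tι.toFun x : W) ∈ M₀'.carrier := by
      intro x
      have hc := c.condition
      have hfg := congrArg (fun m => (aecHomEmb m).toFun x) hc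
      rw [hcar', hs]
      exact ⟨(tι.toFun x).2, hfg⟩
    -- the lifted embedding into M₀'
    refine ⟨⟨⟨fun x => ⟨(tι.toFun x : W), hrange x⟩,
        fun a b h => tι.inj (Subtype.ext (congrArg (fun z : M₀'.carrier => (z : W)) h)), ?_, ?_⟩, ?_⟩, ?_, ?_⟩
    · intro n φ x
      show (tι.toFun _ : W) = M₀'.fn n φ _
      rw [(A.le_sub hle).2.1 n φ _ (fun i => hrange (x i))]
      exact tι.map_fn n φ x
    · intro n r x
      exact (tι.map_rel n r x).trans
        ((A.le_sub hle).2.2 n r _ (fun i => hrange (x i))).symm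
    · -- the lift is a K-embedding
      have hX : A.le tι.imageStruct M.1 := c.ι.2
      have hSubX : Sub tι.imageStruct M₀' := by
        refine ⟨?_, ?_, ?_⟩
        · rintro _ ⟨x, rfl⟩; exact hrange x
        · intro n φ x hx
          refine ((A.le_sub hle).2.1 n φ x fun i => ?_).symm
          obtain ⟨z, hz⟩ := hx i
          exact hz ▸ hrange z
        · intro n r x hx
          exact ((A.le_sub hle).2.2 n r x (fun i => by
            obtain ⟨z, hz⟩ := hx i
            exact hz ▸ hrange z)).symm
      have hXle : A.le tι.imageStruct M₀' := A.coherence hSubX hle hX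
      have hincl := le_incl_image A hXle
      have heq : (Sub.emb (A.le_sub hXle)).imageStruct =
          Emb.imageStruct ⟨fun x => ⟨(tι.toFun x : W), hrange x⟩,
            fun a b h => tι.inj (Subtype.ext (congrArg (fun z : M₀'.carrier => (z : W)) h)), by
              intro n φ x
              show (tι.toFun _ : W) = M₀'.fn n φ _
              rw [(A.le_sub hle).2.1 n φ _ (fun i => hrange (x i))]
              exact tι.map_fn n φ x, by
              intro n r x
              exact (tι.map_rel n r x).trans
                ((A.le_sub hle).2.2 n r _ (fun i => hrange (x i))).symm⟩ := by
        refine SetStruct.ext' ?_ (fun _ _ _ => rfl) (fun _ _ _ => Iff.rfl)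
        exact Subtype.range_coe.trans rfl
      exact heq ▸ hincl
    · exact Subtype.ext (Emb.ext' (funext fun x => Subtype.ext rfl))
    · intro m hm
      apply Subtype.ext
      apply Emb.ext'
      funext x
      apply Subtype.ext
      have h2 := congrArg (fun k : (c.pt ⟶ M) => ((aecHomEmb k).toFun x : W)) hm
      exact h2

end Paper
end
end

section
/- Every pseudo-universal abstract elementary class, regarded as a category with K-embeddings as morphisms, has all connected limits (limits over diagrams whose indexing category is connected). -/
universe u v w

open CategoryTheory CategoryTheory.Limits Cardinal FirstOrder

noncomputable section

namespace Paper

/-! ## Classes of structures in a finitary vocabulary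

A `SetStruct L W` is a `τ`-structure (for the finitary first-order vocabulary `L`)
whose universe is a small subset of the ambient class `W` of elements.  The
interpretations of function and relation symbols are given as total functions on
tuples from `W` (their values outside the universe are irrelevant junk), so that the
substructure relation can be taken literally. -/

variable (L : FirstOrder.Language.{u, u}) (W : Type (u + 1))

variable {L W}

/-! ## Universal classes -/

variable (L W)

variable {L W}

/-! ## Abstract elementary classes -/

variable (L W)

variable {L W}

section Stmt14Aux

/-- The `le` witness of a morphism in the category of an AEC. -/
theorem aecHomLe {A : AEC L W} {M N : A.Cat} (e : M ⟶ N) :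
    A.le (aecHomEmb e).imageStruct N.1 :=
  (e : {f : Emb M.1 N.1 // A.le f.imageStruct N.1}).2

theorem subset_clSet (A : AEC L W) (N : SetStruct L W) (s : Set W) :
    s ⊆ A.clSet N s :=
  fun _ hw => Set.mem_iInter₂.2 fun _ hM => hM.2 hw

variable {A : AEC L W}

/-- If `M ≤ N` and `M'` has the same carrier as `M` and the (total) functions and
relations of `N`, then `M' ≤ N`. -/
theorem le_congr {M N : SetStruct L W} (h : A.le M N) {M' : SetStruct L W}
    (hc : M'.carrier = M.carrier) (hf : M'.fn = N.fn) (hr : M'.rel = N.rel) :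
    A.le M' N := by
  have h2 := A.le_iso (Emb.refl N) (fun x => ⟨x, rfl⟩) h
  have he : (Emb.comp (Emb.refl N) (Sub.emb (A.le_sub h))).imageStruct = M' := by
    refine SetStruct.ext' ?_ (fun n f x => by rw [hf]; rfl) (fun n r x => by rw [hr]; rfl)
    show Set.range _ = M'.carrier
    rw [hc]
    ext w
    constructor
    · rintro ⟨x, rfl⟩; exact x.2
    · intro hw; exact ⟨⟨w, hw⟩, rfl⟩
  rwa [he] at h2

theorem le_sub_emb {M N : SetStruct L W} (h : A.le M N) :
    A.le (Sub.emb (A.le_sub h)).imageStruct N := by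
  refine le_congr h ?_ rfl rfl
  ext w
  constructor
  · rintro ⟨x, rfl⟩; exact x.2
  · intro hw; exact ⟨⟨w, hw⟩, rfl⟩

theorem le_image {M N P : SetStruct L W} (h : A.le M N) (g : Emb N P)
    (hg : A.le g.imageStruct P) :
    A.le (g.comp (Sub.emb (A.le_sub h))).imageStruct P :=
  A.le_image_comp (le_sub_emb h) hg

theorem le_imageStruct_of_surj {M N : SetStruct L W} (e : Emb M N)
    (hs : Function.Surjective e.toFun) (hN : N ∈ A.K) : A.le e.imageStruct N := by
  have he : e.imageStruct = N := by
    refine SetStruct.ext' ?_ (fun _ _ _ => rfl) (fun _ _ _ => Iff.rfl)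
    ext w
    constructor
    · rintro ⟨x, rfl⟩; exact (e.toFun x).2
    · intro hw
      obtain ⟨x, hx⟩ := hs ⟨w, hw⟩
      exact ⟨x, congrArg Subtype.val hx⟩
  rw [he]; exact A.le_refl N hN

/-- The inverse of a bijective embedding. -/
def embInv {M N : SetStruct L W} (e : Emb M N) (hs : Function.Surjective e.toFun) :
    Emb N M where
  toFun := (Equiv.ofBijective e.toFun ⟨e.inj, hs⟩).symm
  inj := (Equiv.ofBijective e.toFun ⟨e.inj, hs⟩).symm.injective
  map_fn := by
    intro n f x
    set E := Equiv.ofBijective e.toFun ⟨e.inj, hs⟩ with hE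
    have hx : ∀ i, x i = e.toFun (E.symm (x i)) := fun i => (E.apply_symm_apply (x i)).symm
    have h1 : (⟨N.fn n f fun i => (x i : W), N.fn_mem n f _ fun i => (x i).2⟩ : N.carrier)
        = E ⟨M.fn n f fun i => ((E.symm (x i) : M.carrier) : W),
            M.fn_mem n f _ fun i => (E.symm (x i)).2⟩ := by
      apply Subtype.ext
      have h2 := e.map_fn n f fun i => E.symm (x i)
      have h3 : (fun i => ((x i : N.carrier) : W))
          = fun i => ((e.toFun (E.symm (x i)) : N.carrier) : W) :=
        funext fun i => congrArg Subtype.val (hx i)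
      show N.fn n f (fun i => ((x i : N.carrier) : W)) = _
      rw [h3]
      exact h2.symm
    have h4 : E.symm (⟨N.fn n f fun i => (x i : W),
        N.fn_mem n f _ fun i => (x i).2⟩ : N.carrier)
        = ⟨M.fn n f fun i => ((E.symm (x i) : M.carrier) : W),
            M.fn_mem n f _ fun i => (E.symm (x i)).2⟩ := by
      rw [h1, E.symm_apply_apply]
    exact congrArg Subtype.val h4
  map_rel := by
    intro n r x
    set E := Equiv.ofBijective e.toFun ⟨e.inj, hs⟩ with hE
    have hx : ∀ i, x i = e.toFun (E.symm (x i)) := fun i => (E.apply_symm_apply (x i)).symm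
    have h3 : (fun i => ((x i : N.carrier) : W))
        = fun i => ((e.toFun (E.symm (x i)) : N.carrier) : W) :=
      funext fun i => congrArg Subtype.val (hx i)
    rw [h3]
    exact (e.map_rel n r fun i => E.symm (x i)).symm

theorem embInv_comp {M N : SetStruct L W} (e : Emb M N) (hs : Function.Surjective e.toFun)
    (x : M.carrier) : (embInv e hs).toFun (e.toFun x) = x :=
  (Equiv.ofBijective e.toFun ⟨e.inj, hs⟩).symm_apply_apply x

theorem comp_embInv {M N : SetStruct L W} (e : Emb M N) (hs : Function.Surjective e.toFun)
    (y : N.carrier) : e.toFun ((embInv e hs).toFun y) = y :=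
  (Equiv.ofBijective e.toFun ⟨e.inj, hs⟩).apply_symm_apply y

theorem embInv_surj {M N : SetStruct L W} (e : Emb M N) (hs : Function.Surjective e.toFun) :
    Function.Surjective (embInv e hs).toFun :=
  fun x => ⟨e.toFun x, embInv_comp e hs x⟩

variable {J : Type u} [SmallCategory J] (D : J ⥤ A.Cat)

/-- Compatible families over the diagram `D`. -/
def Fam : Type (u + 1) :=
  {x : ∀ j : J, ((D.obj j).1.carrier : Type (u + 1)) //
    ∀ (j j' : J) (f : j ⟶ j'), (aecHomEmb (D.map f)).toFun (x j) = x j'}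

/-- The trace of the compatible families at stage `j`. -/
def sD (j : J) : Set W := Set.range fun x : Fam D => ((x.1 j : W))

theorem sD_sub (j : J) : sD D j ⊆ (D.obj j).1.carrier := by
  rintro _ ⟨x, rfl⟩; exact (x.1 j).2

/-- The closure of the trace at stage `j`. -/
def MM (j : J) : SetStruct L W :=
  A.clStruct (D.obj j).1 (sD D j) (D.obj j).2 (sD_sub D j)

theorem memM {j : J} (x : Fam D) : ((x.1 j : W)) ∈ (MM D j).carrier :=
  subset_clSet A (D.obj j).1 (sD D j) ⟨x, rfl⟩

theorem leM (hpu : A.PseudoUniversal) (j : J) : A.le (MM D j) (D.obj j).1 := by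
  obtain ⟨M₀, hle, hcar⟩ := hpu.1 (D.obj j).1 (D.obj j).2 (sD D j) (sD_sub D j)
  exact le_congr hle hcar.symm rfl rfl

theorem memK (hpu : A.PseudoUniversal) (j : J) : MM D j ∈ A.K :=
  (A.le_mem (leM D hpu j)).1

theorem sD_sub_MM (j : J) : sD D j ⊆ (MM D j).carrier :=
  subset_clSet A (D.obj j).1 (sD D j)

theorem clSet_MM (hpu : A.PseudoUniversal) (j : J) :
    A.clSet (MM D j) (sD D j) = (MM D j).carrier := by
  apply Set.Subset.antisymm
  · exact A.clSet_subset (memK D hpu j) (sD_sub_MM D j)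
  · intro w hw
    apply Set.mem_iInter₂.2
    rintro M' ⟨hle', hs'⟩
    exact Set.mem_iInter₂.1 hw M' ⟨A.le_trans hle' (leM D hpu j), hs'⟩

/-- An embedding between closures is *pointed* if it carries the trace of each
compatible family to its trace. -/
def Ptd {j j' : J} (e : Emb (MM D j) (MM D j')) : Prop :=
  ∀ x : Fam D, (e.toFun ⟨(x.1 j : W), memM D x⟩ : W) = (x.1 j' : W)

theorem Ptd_unique (hpu : A.PseudoUniversal) {j j' : J}
    {e₁ e₂ : Emb (MM D j) (MM D j')}
    (h₁ : A.le e₁.imageStruct (MM D j')) (h₂ : A.le e₂.imageStruct (MM D j'))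
    (p₁ : Ptd D e₁) (p₂ : Ptd D e₂) :
    ∀ x, e₁.toFun x = e₂.toFun x := by
  intro x
  refine hpu.2 (MM D j) (MM D j') (memK D hpu j) (memK D hpu j') e₁ e₂ h₁ h₂
    (sD D j) (sD_sub_MM D j) ?_ x ?_
  · rintro y ⟨z, hz⟩
    have hy : y = ⟨(z.1 j : W), memM D z⟩ := Subtype.ext hz.symm
    rw [hy]
    exact Subtype.ext ((p₁ z).trans (p₂ z).symm)
  · rw [clSet_MM D hpu]
    exact x.2

theorem Ptd_surj (hpu : A.PseudoUniversal) {j j' : J} {e : Emb (MM D j) (MM D j')}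
    (h : A.le e.imageStruct (MM D j')) (p : Ptd D e) :
    Function.Surjective e.toFun := by
  intro y
  have h1 : (y : W) ∈ A.clSet (MM D j') (sD D j') := by
    rw [clSet_MM D hpu]; exact y.2
  have h2 : (y : W) ∈ e.imageStruct.carrier := by
    refine Set.mem_iInter₂.1 h1 e.imageStruct ⟨h, ?_⟩
    rintro _ ⟨z, rfl⟩
    exact ⟨⟨(z.1 j : W), memM D z⟩, p z⟩
  obtain ⟨x, hx⟩ := h2
  exact ⟨x, Subtype.ext hx⟩

theorem claimA' (hpu : A.PseudoUniversal) {j j' : J} (f : j ⟶ j') {w : W}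
    (hw : w ∈ (MM D j').carrier) :
    ∃ x : (MM D j).carrier,
      ((aecHomEmb (D.map f)).toFun ⟨x.1, (A.le_sub (leM D hpu j)).1 x.2⟩ : W) = w := by
  have hX := le_image (leM D hpu j) (aecHomEmb (D.map f)) (aecHomLe (D.map f))
  have h2 : w ∈ ((aecHomEmb (D.map f)).comp
      (Sub.emb (A.le_sub (leM D hpu j)))).imageStruct.carrier := by
    refine Set.mem_iInter₂.1 hw _ ⟨hX, ?_⟩
    rintro _ ⟨z, rfl⟩
    refine ⟨⟨(z.1 j : W), memM D z⟩, ?_⟩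
    exact congrArg Subtype.val (z.2 j j' f)
  obtain ⟨x, hx⟩ := h2
  exact ⟨x, hx⟩

theorem mapsInto (hpu : A.PseudoUniversal) {j j' : J} (f : j ⟶ j') {w : W}
    (hw : w ∈ (MM D j).carrier) :
    ((aecHomEmb (D.map f)).toFun ⟨w, (A.le_sub (leM D hpu j)).1 hw⟩ : W)
      ∈ (MM D j').carrier := by
  set ef := aecHomEmb (D.map f) with hef_def
  have hef : A.le ef.imageStruct (D.obj j').1 := aecHomLe (D.map f)
  -- MM j' is a strong substructure of the image of ef
  have hsub : Sub (MM D j') ef.imageStruct := by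
    refine ⟨?_, fun _ _ _ _ => rfl, fun _ _ _ _ => Iff.rfl⟩
    intro v hv
    obtain ⟨x, hx⟩ := claimA' D hpu f hv
    exact ⟨⟨x.1, (A.le_sub (leM D hpu j)).1 x.2⟩, hx⟩
  have h1 : A.le (MM D j') ef.imageStruct :=
    A.coherence hsub hef (leM D hpu j')
  set inv := embInv ef.corestrict (ef.corestrict_surjective) with hinv_def
  have h2 := A.le_iso inv (embInv_surj _ _) h1
  -- sD j ⊆ carrier of the image structure
  have hsY : sD D j ⊆ (inv.comp (Sub.emb (A.le_sub h1))).imageStruct.carrier := by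
    rintro _ ⟨z, rfl⟩
    refine ⟨⟨(z.1 j' : W), memM D z⟩, ?_⟩
    have hc : (Sub.emb (A.le_sub h1)).toFun ⟨(z.1 j' : W), memM D z⟩
        = ef.corestrict.toFun (z.1 j) := by
      apply Subtype.ext
      exact (congrArg Subtype.val (z.2 j j' f)).symm
    show (inv.toFun ((Sub.emb (A.le_sub h1)).toFun ⟨(z.1 j' : W), memM D z⟩) : W) = _
    rw [hc, embInv_comp]
  have h3 : w ∈ (inv.comp (Sub.emb (A.le_sub h1))).imageStruct.carrier :=
    Set.mem_iInter₂.1 hw _ ⟨h2, hsY⟩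
  obtain ⟨y, hy⟩ := h3
  -- hy : (inv.toFun ⟨y.1, _⟩ : W) = w
  have hw' : (⟨w, (A.le_sub (leM D hpu j)).1 hw⟩ : ((D.obj j).1.carrier : Set W))
      = inv.toFun ((Sub.emb (A.le_sub h1)).toFun y) := Subtype.ext hy.symm
  rw [hw']
  have h5 : (ef.toFun (inv.toFun ((Sub.emb (A.le_sub h1)).toFun y)) : W)
      = (((Sub.emb (A.le_sub h1)).toFun y : ef.imageStruct.carrier) : W) := by
    have := comp_embInv ef.corestrict (ef.corestrict_surjective)
      ((Sub.emb (A.le_sub h1)).toFun y)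
    exact congrArg Subtype.val this
  rw [h5]
  exact y.2

/-- The restriction of `D.map f` to the closures. -/
def rr (hpu : A.PseudoUniversal) {j j' : J} (f : j ⟶ j') : Emb (MM D j) (MM D j') where
  toFun x := ⟨((aecHomEmb (D.map f)).toFun ⟨x.1, (A.le_sub (leM D hpu j)).1 x.2⟩ : W),
    mapsInto D hpu f x.2⟩
  inj := by
    intro a b h
    apply Subtype.ext
    have hv := congrArg Subtype.val h
    have h2 : (aecHomEmb (D.map f)).toFun ⟨a.1, (A.le_sub (leM D hpu j)).1 a.2⟩
        = (aecHomEmb (D.map f)).toFun ⟨b.1, (A.le_sub (leM D hpu j)).1 b.2⟩ :=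
      Subtype.ext hv
    have h3 := (aecHomEmb (D.map f)).inj h2
    have h4 := congrArg Subtype.val h3
    exact h4
  map_fn := by
    intro n φ x
    exact (aecHomEmb (D.map f)).map_fn n φ
      fun i => ⟨(x i).1, (A.le_sub (leM D hpu j)).1 (x i).2⟩
  map_rel := by
    intro n r x
    exact (aecHomEmb (D.map f)).map_rel n r
      fun i => ⟨(x i).1, (A.le_sub (leM D hpu j)).1 (x i).2⟩

theorem rr_ptd (hpu : A.PseudoUniversal) {j j' : J} (f : j ⟶ j') : Ptd D (rr D hpu f) :=
  fun z => congrArg Subtype.val (z.2 j j' f)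

theorem rr_surj (hpu : A.PseudoUniversal) {j j' : J} (f : j ⟶ j') :
    Function.Surjective (rr D hpu f).toFun := by
  intro y
  obtain ⟨x, hx⟩ := claimA' D hpu f y.2
  exact ⟨x, Subtype.ext hx⟩

theorem rr_le (hpu : A.PseudoUniversal) {j j' : J} (f : j ⟶ j') :
    A.le (rr D hpu f).imageStruct (MM D j') :=
  le_imageStruct_of_surj _ (rr_surj D hpu f) (memK D hpu j')

/-- `Pt j j'`: there is a pointed strong embedding from the closure at `j` to the
closure at `j'`. -/
def Pt (hpu : A.PseudoUniversal) (j j' : J) : Prop :=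
  ∃ e : Emb (MM D j) (MM D j'), A.le e.imageStruct (MM D j') ∧ Ptd D e

theorem Pt_refl (hpu : A.PseudoUniversal) (j : J) : Pt D hpu j j := by
  refine ⟨Emb.refl (MM D j), ?_, fun x => rfl⟩
  rw [imageStruct_refl]
  exact A.le_refl _ (memK D hpu j)

theorem Pt_comp (hpu : A.PseudoUniversal) {j j' j'' : J}
    (h1 : Pt D hpu j j') (h2 : Pt D hpu j' j'') : Pt D hpu j j'' := by
  obtain ⟨e₁, hle₁, hp₁⟩ := h1
  obtain ⟨e₂, hle₂, hp₂⟩ := h2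
  refine ⟨e₂.comp e₁, A.le_image_comp hle₁ hle₂, ?_⟩
  intro x
  have h3 : e₁.toFun ⟨(x.1 j : W), memM D x⟩ = ⟨(x.1 j' : W), memM D x⟩ :=
    Subtype.ext (hp₁ x)
  show (e₂.toFun (e₁.toFun ⟨(x.1 j : W), memM D x⟩) : W) = _
  rw [h3]
  exact hp₂ x

theorem Pt_symm (hpu : A.PseudoUniversal) {j j' : J} (h : Pt D hpu j j') :
    Pt D hpu j' j := by
  obtain ⟨e, hle, hp⟩ := h
  have hs : Function.Surjective e.toFun := Ptd_surj D hpu hle hp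
  refine ⟨embInv e hs, le_imageStruct_of_surj _ (embInv_surj e hs) (memK D hpu j), ?_⟩
  intro x
  have h1 : e.toFun ⟨(x.1 j : W), memM D x⟩ = ⟨(x.1 j' : W), memM D x⟩ :=
    Subtype.ext (hp x)
  have h2 : (embInv e hs).toFun ⟨(x.1 j' : W), memM D x⟩ = ⟨(x.1 j : W), memM D x⟩ := by
    rw [← h1, embInv_comp]
  exact congrArg Subtype.val h2

theorem Pt_hom (hpu : A.PseudoUniversal) {j j' : J} (f : j ⟶ j') : Pt D hpu j j' :=
  ⟨rr D hpu f, rr_le D hpu f, rr_ptd D hpu f⟩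

theorem Pt_all (hpu : A.PseudoUniversal) [IsConnected J] (j₀ : J) :
    ∀ j, Pt D hpu j₀ j := by
  intro j
  refine induct_on_objects {j | Pt D hpu j₀ j} (Pt_refl D hpu j₀) ?_ j
  intro j₁ j₂ f
  exact ⟨fun h => Pt_comp D hpu h (Pt_hom D hpu f),
    fun h => Pt_comp D hpu h (Pt_symm D hpu (Pt_hom D hpu f))⟩

section Cone

variable [IsConnected J] (hpu : A.PseudoUniversal)

/-- The chosen pointed strong embedding from the base closure to the closure at `j`. -/
def EE (j : J) : Emb (MM D (Classical.arbitrary J)) (MM D j) :=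
  (Pt_all D hpu (Classical.arbitrary J) j).choose

theorem EE_le (j : J) : A.le (EE D hpu j).imageStruct (MM D j) :=
  (Pt_all D hpu (Classical.arbitrary J) j).choose_spec.1

theorem EE_ptd (j : J) : Ptd D (EE D hpu j) :=
  (Pt_all D hpu (Classical.arbitrary J) j).choose_spec.2

/-- The apex of the limit cone. -/
def limPt : A.Cat := ⟨MM D (Classical.arbitrary J), memK D hpu (Classical.arbitrary J)⟩

/-- The legs of the limit cone. -/
def leg (j : J) : limPt D hpu ⟶ D.obj j :=
  ⟨(Sub.emb (A.le_sub (leM D hpu j))).comp (EE D hpu j),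
    A.le_image_comp (EE_le D hpu j) (le_sub_emb (leM D hpu j))⟩

theorem leg_nat {j j' : J} (f : j ⟶ j') : leg D hpu j ≫ D.map f = leg D hpu j' := by
  apply Subtype.ext
  apply Emb.ext'
  funext x
  apply Subtype.ext
  have p1 : Ptd D ((rr D hpu f).comp (EE D hpu j)) := by
    intro z
    have h3 : (EE D hpu j).toFun ⟨(z.1 (Classical.arbitrary J) : W), memM D z⟩
        = ⟨(z.1 j : W), memM D z⟩ := Subtype.ext (EE_ptd D hpu j z)
    show ((rr D hpu f).toFun ((EE D hpu j).toFun
      ⟨(z.1 (Classical.arbitrary J) : W), memM D z⟩) : W) = _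
    rw [h3]
    exact rr_ptd D hpu f z
  have hu := Ptd_unique D hpu (A.le_image_comp (EE_le D hpu j) (rr_le D hpu f))
    (EE_le D hpu j') p1 (EE_ptd D hpu j') x
  have hval := congrArg Subtype.val hu
  exact hval

/-- The limit cone. -/
def limCone : Cone D where
  pt := limPt D hpu
  π :=
    { app := leg D hpu
      naturality := by
        intro j j' f
        apply Subtype.ext
        apply Emb.ext'
        have hv := congrArg
          (fun e : limPt D hpu ⟶ D.obj j' => (aecHomEmb e).toFun) (leg_nat D hpu f)
        exact hv.symm }

/-- The compatible family determined by a point of the apex of a cone. -/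
def famOf (c : Cone D) (n : c.pt.1.carrier) : Fam D :=
  ⟨fun j => (aecHomEmb (c.π.app j)).toFun n, by
    intro j j' f
    exact congrArg (fun e : c.pt ⟶ D.obj j' => (aecHomEmb e).toFun n) (c.w f)⟩

/-- The embedding of the apex of an arbitrary cone into the apex of the limit cone. -/
def uEmb (c : Cone D) : Emb c.pt.1 (MM D (Classical.arbitrary J)) where
  toFun n := ⟨((aecHomEmb (c.π.app (Classical.arbitrary J))).toFun n : W),
    memM D (famOf D c n)⟩
  inj := by
    intro a b h
    have hv := congrArg Subtype.val h
    exact (aecHomEmb (c.π.app (Classical.arbitrary J))).inj (Subtype.ext hv)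
  map_fn := by
    intro n f x
    exact (aecHomEmb (c.π.app (Classical.arbitrary J))).map_fn n f x
  map_rel := by
    intro n r x
    exact (aecHomEmb (c.π.app (Classical.arbitrary J))).map_rel n r x

theorem uEmb_le (hpu : A.PseudoUniversal) (c : Cone D) :
    A.le (uEmb D c).imageStruct (MM D (Classical.arbitrary J)) := by
  have himg : (uEmb D c).imageStruct
      = (aecHomEmb (c.π.app (Classical.arbitrary J))).imageStruct := by
    refine SetStruct.ext' ?_ (fun _ _ _ => rfl) (fun _ _ _ => Iff.rfl)
    ext w
    constructor
    · rintro ⟨n, rfl⟩; exact ⟨n, rfl⟩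
    · rintro ⟨n, rfl⟩; exact ⟨n, rfl⟩
  have hsub : Sub (aecHomEmb (c.π.app (Classical.arbitrary J))).imageStruct
      (MM D (Classical.arbitrary J)) := by
    refine ⟨?_, fun _ _ _ _ => rfl, fun _ _ _ _ => Iff.rfl⟩
    rintro _ ⟨n, rfl⟩
    exact memM D (famOf D c n)
  rw [himg]
  exact A.coherence hsub (leM D hpu (Classical.arbitrary J))
    (aecHomLe (c.π.app (Classical.arbitrary J)))

/-- The mediating morphism from a cone to the limit cone. -/
def limLift (c : Cone D) : c.pt ⟶ limPt D hpu := ⟨uEmb D c, uEmb_le D hpu c⟩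

theorem lim_fac (c : Cone D) (j : J) :
    limLift D hpu c ≫ leg D hpu j = c.π.app j := by
  apply Subtype.ext
  apply Emb.ext'
  funext n
  apply Subtype.ext
  exact EE_ptd D hpu j (famOf D c n)

theorem lim_uniq (c : Cone D) (m : c.pt ⟶ limPt D hpu)
    (hm : ∀ j, m ≫ leg D hpu j = c.π.app j) : m = limLift D hpu c := by
  apply Subtype.ext
  apply Emb.ext'
  funext n
  apply Subtype.ext
  have h1 := congrArg (fun e : c.pt ⟶ D.obj (Classical.arbitrary J) =>
    (aecHomEmb e).toFun n) (hm (Classical.arbitrary J))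
  have h1v := congrArg Subtype.val h1
  have hrefl_le : A.le (Emb.refl (MM D (Classical.arbitrary J))).imageStruct
      (MM D (Classical.arbitrary J)) := by
    rw [imageStruct_refl]
    exact A.le_refl _ (memK D hpu (Classical.arbitrary J))
  have hid := Ptd_unique D hpu (EE_le D hpu (Classical.arbitrary J)) hrefl_le
    (EE_ptd D hpu (Classical.arbitrary J)) (fun z => rfl)
    ((aecHomEmb m).toFun n)
  have hidv := congrArg Subtype.val hid
  exact hidv.symm.trans h1v

/-- The limit cone is a limit. -/
def limIsLimit : IsLimit (limCone D hpu) where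
  lift := limLift D hpu
  fac := lim_fac D hpu
  uniq := lim_uniq D hpu

end Cone

end Stmt14Aux

/-- Every pseudo-universal AEC, as a category with K-embeddings
as morphisms, has all connected limits. -/
theorem statement_14 (L : FirstOrder.Language.{u, u}) (W : Type (u + 1)) (A : AEC L W)
    (hpu : A.PseudoUniversal) :
    HasConnectedLimits.{u} A.Cat := by
  intro J _ hJ
  haveI := hJ
  exact ⟨fun D => HasLimit.mk ⟨limCone D hpu, limIsLimit D hpu⟩⟩

end Paper
end
end
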